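/- arXiv:1508.03445 — 7 statements merged into one kernel-verified Lean document; each statement's English description precedes it below -/
import Mathlib

section
/- For every permutation π of {1,…,n}, the set L(π) is a skew Ferrers diagram; that is, whenever (i,j), (i',j') ∈ L(π) with i ≤ i' and j ≤ j', every box (a,b) with i ≤ a ≤ i' and j ≤ b ≤ j' also lies in L(π). -/
open scoped BigOperators

/-- `π` is a permutation of `{1,…,n}` (extended to `ℕ` by fixing all other points). -/
def IsPermOn (n : ℕ) (π : Equiv.Perm ℕ) : Prop :=
  ∀ i : ℕ, ¬(1 ≤ i ∧ i ≤ n) → π i = i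

/-- The Rothe diagram `D(π) = {(π(j), i) : i < j, π(i) > π(j)}`. -/
def RD (π : Equiv.Perm ℕ) : Set (ℕ × ℕ) :=
  {p | ∃ i j : ℕ, i < j ∧ π j < π i ∧ p = (π j, i)}

/-- Two boxes are edge-adjacent: `|i−i'| + |j−j'| = 1`. -/
def AdjBox (p q : ℕ × ℕ) : Prop :=
  (p.1 = q.1 ∧ (p.2 = q.2 + 1 ∨ q.2 = p.2 + 1)) ∨
  (p.2 = q.2 ∧ (p.1 = q.1 + 1 ∨ q.1 = p.1 + 1))

/-- The dominant piece `dom(π)`: the boxes of `D(π)` joined to `(1,1)` by a path of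
edge-adjacent boxes of `D(π)` (empty if `(1,1) ∉ D(π)`). -/
def domPiece (π : Equiv.Perm ℕ) : Set (ℕ × ℕ) :=
  {q | (1, 1) ∈ RD π ∧
    Relation.ReflTransGen (fun a b => b ∈ RD π ∧ AdjBox a b) (1, 1) q}

/-- `NW(π)`: the boxes lying (weakly) northwest of some box of `D(π)`. -/
def NWset (π : Equiv.Perm ℕ) : Set (ℕ × ℕ) :=
  {p | 1 ≤ p.1 ∧ 1 ≤ p.2 ∧ ∃ q ∈ RD π, p.1 ≤ q.1 ∧ p.2 ≤ q.2}

/-- `L(π) = NW(π) ∖ dom(π)`. -/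
def Lset (π : Equiv.Perm ℕ) : Set (ℕ × ℕ) := NWset π \ domPiece π

/-- `L'(π) = L(π) ∖ D(π)`. -/
def L'set (π : Equiv.Perm ℕ) : Set (ℕ × ℕ) := Lset π \ RD π

/-- Fulton's essential set: the southeast corners of `D(π)`. -/
def EssSet (π : Equiv.Perm ℕ) : Set (ℕ × ℕ) :=
  {p | p ∈ RD π ∧ (p.1 + 1, p.2) ∉ RD π ∧ (p.1, p.2 + 1) ∉ RD π}
/-- A set of boxes is a skew Ferrers diagram: whenever `(i,j), (i',j')` belong to it with
`i ≤ i'` and `j ≤ j'`, every box `(a,b)` with `i ≤ a ≤ i'` and `j ≤ b ≤ j'` belongs to it. -/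
def IsSkew (A : Set (ℕ × ℕ)) : Prop :=
  ∀ p ∈ A, ∀ q ∈ A, ∀ a b : ℕ, p.1 ≤ a → a ≤ q.1 → p.2 ≤ b → b ≤ q.2 → (a, b) ∈ A

lemma mem_RD (π : Equiv.Perm ℕ) (r c : ℕ) :
    (r, c) ∈ RD π ↔ c < π.symm r ∧ r < π c := by
  constructor
  · rintro ⟨i, j, hij, hlt, heq⟩
    have hr : r = π j := congrArg Prod.fst heq
    have hc : c = i := congrArg Prod.snd heq
    subst hr; subst hc
    simpa using ⟨hij, hlt⟩
  · rintro ⟨h1, h2⟩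
    exact ⟨c, π.symm r, h1, by simpa using h2, by simp⟩

lemma RD_pos {π : Equiv.Perm ℕ} (hπ0 : π 0 = 0) {p : ℕ × ℕ} (hp : p ∈ RD π) :
    1 ≤ p.1 ∧ 1 ≤ p.2 := by
  obtain ⟨i, j, hij, hlt, heq⟩ := hp
  subst heq
  have hsymm0 : π.symm 0 = 0 := by rw [Equiv.symm_apply_eq, hπ0]
  constructor
  · simp only
    by_contra h
    have h1 : π j = 0 := by omega
    have : j = 0 := by
      have h2 := congrArg π.symm h1
      rwa [Equiv.symm_apply_apply, hsymm0] at h2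
    omega
  · simp only
    by_contra h
    have hi : i = 0 := by omega
    rw [hi, hπ0] at hlt
    omega

/-- Full NW rectangles contained in the Rothe diagram. -/
def Rect (π : Equiv.Perm ℕ) : Set (ℕ × ℕ) :=
  {p | 1 ≤ p.1 ∧ 1 ≤ p.2 ∧ ∀ s t, 1 ≤ s → s ≤ p.1 → 1 ≤ t → t ≤ p.2 → (s, t) ∈ RD π}

lemma dom_subset_rect {π : Equiv.Perm ℕ} (hπ0 : π 0 = 0) :
    domPiece π ⊆ Rect π := by
  rintro q ⟨h11, hpath⟩
  induction hpath with
  | refl =>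
    refine ⟨le_refl 1, le_refl 1, fun s t hs hsi ht htj => ?_⟩
    have : s = 1 := le_antisymm hsi hs
    have : t = 1 := le_antisymm htj ht
    simp_all
  | @tail b c _ hbc ih =>
    obtain ⟨hcD, hadj⟩ := hbc
    obtain ⟨hi, hj, hrect⟩ := ih
    have hcpos := RD_pos hπ0 hcD
    rcases hadj with ⟨h1, h2 | h2⟩ | ⟨h1, h2 | h2⟩
    · -- c is one step left of b
      exact ⟨hcpos.1, hcpos.2, fun s t hs hsi ht htj =>
        hrect s t hs (by omega) ht (by omega)⟩
    · -- c is one step right of b: extend the rectangle by a column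
      refine ⟨hcpos.1, hcpos.2, fun s t hs hsi ht htj => ?_⟩
      rcases Nat.lt_or_ge t c.2 with hlt | hge
      · exact hrect s t hs (by omega) ht (by omega)
      · have ht' : t = b.2 + 1 := by omega
        have hcD' : c.2 < π.symm c.1 ∧ c.1 < π c.2 := by
          have := (mem_RD π c.1 c.2).mp (by simpa using hcD)
          exact this
        have hs' : s < π t := by
          rw [ht', ← h2]
          exact lt_of_le_of_lt hsi hcD'.2
        have hsb : b.2 < π.symm s := by
          have := (mem_RD π s b.2).mp (hrect s b.2 hs (by omega) hj le_rfl)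
          exact this.1
        have : t < π.symm s := by
          rcases Nat.lt_or_ge (b.2 + 1) (π.symm s) with h | h
          · omega
          · exfalso
            have he : π.symm s = b.2 + 1 := by omega
            have : s = π (b.2 + 1) := by
              rw [← he, Equiv.apply_symm_apply]
            rw [ht'] at hs'
            omega
        exact (mem_RD π s t).mpr ⟨this, hs'⟩
    · -- c is one step up from b
      exact ⟨hcpos.1, hcpos.2, fun s t hs hsi ht htj =>
        hrect s t hs (by omega) ht (by omega)⟩
    · -- c is one step down from b: extend the rectangle by a row
      refine ⟨hcpos.1, hcpos.2, fun s t hs hsi ht htj => ?_⟩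
      rcases Nat.lt_or_ge s c.1 with hlt | hge
      · exact hrect s t hs (by omega) ht (by omega)
      · have hs' : s = b.1 + 1 := by omega
        have hcD' : c.2 < π.symm c.1 ∧ c.1 < π c.2 := by
          have := (mem_RD π c.1 c.2).mp (by simpa using hcD)
          exact this
        have ht' : t < π.symm s := by
          rw [hs', ← h2]
          exact lt_of_le_of_lt htj hcD'.1
        have htb : b.1 < π t := by
          have := (mem_RD π b.1 t).mp (hrect b.1 t hi le_rfl ht (by omega))
          exact this.2
        have : s < π t := by
          rcases Nat.lt_or_ge (b.1 + 1) (π t) with h | h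
          · omega
          · exfalso
            have he : π t = b.1 + 1 := by omega
            have : π.symm (b.1 + 1) = t := by
              rw [← he, Equiv.symm_apply_apply]
            rw [hs'] at ht'
            omega
        exact (mem_RD π s t).mpr ⟨ht', this⟩

lemma reach_col {π : Equiv.Perm ℕ} :
    ∀ i, 1 ≤ i → (∀ s, 1 ≤ s → s ≤ i → (s, 1) ∈ RD π) →
    Relation.ReflTransGen (fun a b => b ∈ RD π ∧ AdjBox a b) (1, 1) (i, 1) := by
  intro i
  induction i with
  | zero => intro h; omega
  | succ m ih =>
    intro _ h
    rcases Nat.lt_or_ge 1 (m + 1) with hm | hm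
    · have hprev := ih (by omega) (fun s hs hsm => h s hs (by omega))
      exact hprev.tail ⟨h (m + 1) (by omega) le_rfl, Or.inr ⟨rfl, Or.inr rfl⟩⟩
    · have : m + 1 = 1 := by omega
      rw [this]

lemma reach_row {π : Equiv.Perm ℕ} (i : ℕ) :
    ∀ j, 1 ≤ j → (∀ t, 1 ≤ t → t ≤ j → (i, t) ∈ RD π) →
    Relation.ReflTransGen (fun a b => b ∈ RD π ∧ AdjBox a b) (i, 1) (i, j) := by
  intro j
  induction j with
  | zero => intro h; omega
  | succ m ih =>
    intro _ h
    rcases Nat.lt_or_ge 1 (m + 1) with hm | hm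
    · have hprev := ih (by omega) (fun t ht htm => h t ht (by omega))
      exact hprev.tail ⟨h (m + 1) (by omega) le_rfl, Or.inl ⟨rfl, Or.inr rfl⟩⟩
    · have : m + 1 = 1 := by omega
      rw [this]

lemma dom_nw {π : Equiv.Perm ℕ} (hπ0 : π 0 = 0) {a b i j : ℕ}
    (hab : (a, b) ∈ domPiece π) (hi : 1 ≤ i) (hj : 1 ≤ j)
    (hia : i ≤ a) (hjb : j ≤ b) : (i, j) ∈ domPiece π := by
  obtain ⟨_, _, hrect⟩ := dom_subset_rect hπ0 hab
  refine ⟨hab.1, ?_⟩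
  have h1 : Relation.ReflTransGen (fun a b => b ∈ RD π ∧ AdjBox a b) (1, 1) (i, 1) :=
    reach_col i hi (fun s hs hsi => hrect s 1 hs (by omega) le_rfl (by omega))
  have h2 : Relation.ReflTransGen (fun a b => b ∈ RD π ∧ AdjBox a b) (i, 1) (i, j) :=
    reach_row i j hj (fun t ht htj => hrect i t hi (by omega) ht (by omega))
  exact h1.trans h2

theorem stmt0 (n : ℕ) (hn : 1 ≤ n) (π : Equiv.Perm ℕ) (hπ : IsPermOn n π) :
    IsSkew (Lset π) := by
  have hπ0 : π 0 = 0 := hπ 0 (by omega)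
  rintro p ⟨hpNW, hpdom⟩ q ⟨hqNW, hqdom⟩ a b hpa haq hpb hbq
  obtain ⟨hp1, hp2, _⟩ := hpNW
  obtain ⟨_, _, r, hrD, hr1, hr2⟩ := hqNW
  constructor
  · exact ⟨le_trans hp1 hpa, le_trans hp2 hpb, r, hrD, le_trans haq hr1, le_trans hbq hr2⟩
  · intro habdom
    have : (p.1, p.2) ∈ domPiece π := dom_nw hπ0 habdom hp1 hp2 hpa hpb
    exact hpdom (by simpa using this)
end

section
/- For every permutation π of {1,…,n} and every pair (a,b) ∈ {1,…,n}×{1,…,n}: there is no j ≤ b with π(j) ≤ a (equivalently, the upper-left a×b submatrix of the permutation matrix of π is the zero matrix, i.e., the rank r_π(a,b) equals 0) if and only if (a,b) ∈ dom(π). -/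
open scoped BigOperators

/-- Auxiliary predicate: no `j ∈ [1,b]` has `π j ≤ a`. -/
def Sset (π : Equiv.Perm ℕ) (a b : ℕ) : Prop := ∀ j, 1 ≤ j → j ≤ b → a < π j

lemma Sset.mono {π : Equiv.Perm ℕ} {a b a' b' : ℕ} (h : Sset π a b) (ha : a' ≤ a)
    (hb : b' ≤ b) : Sset π a' b' :=
  fun j h1 h2 => lt_of_le_of_lt ha (h j h1 (h2.trans hb))

lemma mem_RD_of_S {π : Equiv.Perm ℕ} (h0 : π 0 = 0) {a b : ℕ} (ha : 1 ≤ a) (hb : 1 ≤ b)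
    (h : Sset π a b) : (a, b) ∈ RD π := by
  have hπj : π (π.symm a) = a := π.apply_symm_apply a
  have hj1 : 1 ≤ π.symm a := by
    rcases Nat.eq_zero_or_pos (π.symm a) with h' | h'
    · rw [h', h0] at hπj
      omega
    · exact h'
  have hbj : b < π.symm a := by
    by_contra hbj
    have := h (π.symm a) hj1 (by omega)
    omega
  exact ⟨b, π.symm a, hbj, by rw [hπj]; exact h b hb le_rfl, by rw [hπj]⟩

lemma pathA {π : Equiv.Perm ℕ} (h0 : π 0 = 0) {a : ℕ} (ha : 1 ≤ a)
    (h : Sset π a 1) :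
    Relation.ReflTransGen (fun p q => q ∈ RD π ∧ AdjBox p q) (1, 1) (a, 1) := by
  induction a, ha using Nat.le_induction with
  | base => exact Relation.ReflTransGen.refl
  | succ a ha ih =>
    refine (ih (h.mono (by omega) le_rfl)).tail ⟨mem_RD_of_S h0 (by omega) le_rfl h, ?_⟩
    exact Or.inr ⟨rfl, Or.inr rfl⟩

lemma pathB {π : Equiv.Perm ℕ} (h0 : π 0 = 0) {a b : ℕ} (ha : 1 ≤ a) (hb : 1 ≤ b)
    (h : Sset π a b) :
    Relation.ReflTransGen (fun p q => q ∈ RD π ∧ AdjBox p q) (1, 1) (a, b) := by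
  induction b, hb using Nat.le_induction with
  | base => exact pathA h0 ha h
  | succ b hb ih =>
    refine (ih (h.mono le_rfl (by omega))).tail ⟨mem_RD_of_S h0 ha (by omega) h, ?_⟩
    exact Or.inl ⟨rfl, Or.inr rfl⟩

lemma S_of_dom {π : Equiv.Perm ℕ} (h0 : π 0 = 0) {a b : ℕ}
    (h : (a, b) ∈ domPiece π) : Sset π a b := by
  obtain ⟨h11, hpath⟩ := h
  have hS11 : Sset π 1 1 := by
    obtain ⟨i, j, hij, hlt, heq⟩ := h11
    have hi : (1 : ℕ) = i := by simpa using congrArg Prod.snd heq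
    have hj : π j = 1 := (congrArg Prod.fst heq).symm
    intro k hk1 hk2
    have hk : k = 1 := by omega
    subst hk
    -- π 1 ≠ 1 since π j = 1 with j > i = 1, and π 1 ≠ 0 since π 0 = 0
    have h1 : π 1 ≠ 1 := by
      intro hcon
      have : (1 : ℕ) = j := π.injective (by rw [hcon, hj])
      omega
    have h2 : π 1 ≠ 0 := by
      intro hcon
      have : (1 : ℕ) = 0 := π.injective (by rw [hcon, h0])
      omega
    omega
  have key : ∀ q : ℕ × ℕ,
      Relation.ReflTransGen (fun p q => q ∈ RD π ∧ AdjBox p q) (1, 1) q →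
      Sset π q.1 q.2 := by
    intro q hq
    induction hq with
    | refl => exact hS11
    | tail _ hstep ih =>
      rename_i c q _
      obtain ⟨hqRD, hadj⟩ := hstep
      obtain ⟨i, j, hij, hlt, heq⟩ := hqRD
      have hi : i = q.2 := by simpa using (congrArg Prod.snd heq).symm
      have hj : π j = q.1 := (congrArg Prod.fst heq).symm
      rcases hadj with ⟨h1, h2 | h2⟩ | ⟨h1, h2 | h2⟩
      · -- q.2 + 1 = c.2 : q west of c
        exact ih.mono (le_of_eq h1.symm) (by omega)
      · -- q.2 = c.2 + 1 : q east of c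
        intro k hk1 hk2
        rcases Nat.lt_or_ge k q.2 with hk | hk
        · exact lt_of_le_of_lt (le_of_eq h1.symm) (ih k hk1 (by omega))
        · have hk' : k = q.2 := by omega
          subst hk'
          rw [← hi, ← hj]
          exact hlt
      · -- c.1 = q.1 + 1 : q north of c
        exact ih.mono (by omega) (le_of_eq h1.symm)
      · -- q.1 = c.1 + 1 : q south of c
        intro k hk1 hk2
        have hck := ih k hk1 (by omega)
        have hne : π k ≠ q.1 := by
          intro hcon
          have : k = j := π.injective (by rw [hcon, hj])
          omega
        omega
  exact key (a, b) hpath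

theorem stmt1 (n : ℕ) (hn : 1 ≤ n) (π : Equiv.Perm ℕ) (hπ : IsPermOn n π)
    (a b : ℕ) (ha : 1 ≤ a) (han : a ≤ n) (hb : 1 ≤ b) (hbn : b ≤ n) :
    (¬ ∃ j : ℕ, 1 ≤ j ∧ j ≤ b ∧ π j ≤ a) ↔ (a, b) ∈ domPiece π := by
  have h0 : π 0 = 0 := hπ 0 (by omega)
  have hiff : (¬ ∃ j : ℕ, 1 ≤ j ∧ j ≤ b ∧ π j ≤ a) ↔ Sset π a b := by
    unfold Sset
    push_neg
    rfl
  rw [hiff]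
  constructor
  · intro hS
    exact ⟨mem_RD_of_S h0 le_rfl le_rfl (hS.mono ha hb), pathB h0 ha hb hS⟩
  · exact S_of_dom h0
end

section
/- If π is a permutation of {1,…,n} of the form π = 1π' with π' dominant, with D(π) given by the nonempty partition λ = (λ_1 ≥ … ≥ λ_ℓ > 0), then L'(π) is a hook; explicitly, L'(π) = {(1,j) : 1 ≤ j ≤ λ_1 + 1} ∪ {(i,1) : 1 ≤ i ≤ ℓ + 1}. -/
open scoped BigOperators

/-- `π = 1π'` with `π'` dominant: `π(1) = 1` and `D(π)` is the Young diagram of the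
nonempty partition `λ = (lam 1 ≥ … ≥ lam ℓ > 0)` with northwest-most box at `(2,2)`. -/
def DominantOne (π : Equiv.Perm ℕ) (ℓ : ℕ) (lam : ℕ → ℕ) : Prop :=
  π 1 = 1 ∧ 1 ≤ ℓ ∧
  (∀ i j : ℕ, 1 ≤ i → i ≤ j → j ≤ ℓ → lam j ≤ lam i) ∧
  (∀ i : ℕ, 1 ≤ i → i ≤ ℓ → 1 ≤ lam i) ∧
  RD π = {p | ∃ i j : ℕ, 1 ≤ i ∧ i ≤ ℓ ∧ 1 ≤ j ∧ j ≤ lam i ∧ p = (i + 1, j + 1)}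

theorem stmt2 (n : ℕ) (hn : 1 ≤ n) (π : Equiv.Perm ℕ) (hπ : IsPermOn n π)
    (ℓ : ℕ) (lam : ℕ → ℕ) (hdom : DominantOne π ℓ lam) :
    L'set π =
      {p : ℕ × ℕ | p.1 = 1 ∧ 1 ≤ p.2 ∧ p.2 ≤ lam 1 + 1} ∪
      {p : ℕ × ℕ | p.2 = 1 ∧ 1 ≤ p.1 ∧ p.1 ≤ ℓ + 1} := by
  obtain ⟨h1, hℓ, hmono, hpos, hRD⟩ := hdom
  have h11 : (1, 1) ∉ RD π := by
    rw [hRD]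
    rintro ⟨i, j, hi, -, -, -, h⟩
    have := congrArg Prod.fst h
    simp at this; omega
  have hdomE : domPiece π = ∅ := by
    ext q
    simp only [domPiece, Set.mem_setOf_eq, Set.mem_empty_iff_false, iff_false, not_and]
    exact fun h _ => h11 h
  ext ⟨a, b⟩
  simp only [L'set, Lset, hdomE, Set.diff_empty, Set.mem_diff, NWset, Set.mem_setOf_eq,
    Set.mem_union]
  constructor
  · rintro ⟨⟨ha, hb, ⟨q1, q2⟩, hq, hle1, hle2⟩, hnot⟩
    rw [hRD] at hq hnot
    obtain ⟨i, j, hi1, hiℓ, hj1, hjl, he⟩ := hq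
    have hq1 : q1 = i + 1 := congrArg Prod.fst he
    have hq2 : q2 = j + 1 := congrArg Prod.snd he
    subst hq1; subst hq2
    simp only at hle1 hle2
    by_cases ha1 : a = 1
    · left
      have := hmono 1 i le_rfl hi1 hiℓ
      exact ⟨ha1, hb, by omega⟩
    · by_cases hb1 : b = 1
      · right; exact ⟨hb1, ha, by omega⟩
      · exfalso
        apply hnot
        refine ⟨a - 1, b - 1, by omega, by omega, by omega, ?_, by
          rw [Prod.mk.injEq]; omega⟩
        have := hmono (a - 1) i (by omega) (by omega) hiℓ
        omega
  · rintro (⟨ha, hb1, hb2⟩ | ⟨hb, ha1, ha2⟩)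
    · refine ⟨⟨by omega, hb1, ⟨1 + 1, lam 1 + 1⟩, ?_, by omega, by omega⟩, ?_⟩
      · rw [hRD]
        exact ⟨1, lam 1, le_rfl, hℓ, hpos 1 le_rfl hℓ, le_rfl, rfl⟩
      · rw [hRD]
        rintro ⟨i, j, hi1, -, -, -, he⟩
        have := congrArg Prod.fst he
        simp at this; omega
    · refine ⟨⟨ha1, by omega, ⟨ℓ + 1, 1 + 1⟩, ?_, by omega, by omega⟩, ?_⟩
      · rw [hRD]
        exact ⟨ℓ, 1, hℓ, le_rfl, le_rfl, hpos ℓ hℓ le_rfl, rfl⟩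
      · rw [hRD]
        rintro ⟨i, j, -, -, hj1, -, he⟩
        have := congrArg Prod.snd he
        simp at this; omega
end

section
/- Let D be a skew Ferrers diagram occupying exactly rows 1,…,r and columns 1,…,c, with components D_1,…,D_k. A subset S ⊆ D is a noncrossing alternating spanning forest of G_D with r+c−k edges if and only if, for each t ∈ {1,…,k}, the set S ∩ D_t is the set of boxes of a monotone lattice path in D_t. Consequently, the noncrossing alternating spanning forests of G_D with r+c−k edges are in bijection with k-tuples (p_1,…,p_k) where p_t is a monotone lattice path in D_t. -/
open scoped BigOperators

/-- `A` occupies exactly the rows `1,…,r` and the columns `1,…,c`. -/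
def Occupies (A : Set (ℕ × ℕ)) (r c : ℕ) : Prop :=
  (∀ p ∈ A, 1 ≤ p.1 ∧ p.1 ≤ r ∧ 1 ≤ p.2 ∧ p.2 ≤ c) ∧
  (∀ i, 1 ≤ i → i ≤ r → ∃ j, (i, j) ∈ A) ∧
  (∀ j, 1 ≤ j → j ≤ c → ∃ i, (i, j) ∈ A)

/-- Two boxes of `A` lie in the same component of `A` (equivalently, the corresponding
edges lie in the same connected component of the bipartite graph `G_A`): they are joined
by a chain of boxes of `A` successively sharing a row or a column. -/
def sameComp (A : Set (ℕ × ℕ)) (p q : A) : Prop :=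
  Relation.ReflTransGen
    (fun a b : A => (a : ℕ × ℕ).1 = (b : ℕ × ℕ).1 ∨ (a : ℕ × ℕ).2 = (b : ℕ × ℕ).2) p q

/-- The number of connected components of the bipartite graph `G_A` (for `A` occupying
exactly its rows and columns, this is the number of components of `A` under the
transitive closure of sharing a row or column). -/
noncomputable def compCount (A : Set (ℕ × ℕ)) : ℕ := Nat.card (Quot (sameComp A))

/-- The bipartite graph on the boxes `S` (rows and columns as vertices, boxes as edges)
is acyclic: every nonempty subset of `S` contains a box which is alone in its row or
alone in its column within that subset (i.e. every nonempty subgraph has a vertex of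
degree one, which characterizes forests). -/
def RowColAcyclic (S : Finset (ℕ × ℕ)) : Prop :=
  ∀ S' ⊆ S, S'.Nonempty → ∃ p ∈ S',
    (S'.filter (fun q => q.1 = p.1)).card = 1 ∨ (S'.filter (fun q => q.2 = p.2)).card = 1

/-- `S ⊆ D` is a noncrossing alternating spanning forest of `G_D` with `r+c-k` edges. -/
def IsNASF (D : Finset (ℕ × ℕ)) (r c k : ℕ) (S : Finset (ℕ × ℕ)) : Prop :=
  S ⊆ D ∧ S.card = r + c - k ∧
  (∀ i, 1 ≤ i → i ≤ r → ∃ j, (i, j) ∈ S) ∧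
  (∀ j, 1 ≤ j → j ≤ c → ∃ i, (i, j) ∈ S) ∧
  RowColAcyclic S ∧
  ∀ p ∈ S, ∀ q ∈ S, ¬(p.1 < q.1 ∧ p.2 < q.2)

/-- The vertex `e_i - e_{r+j} ∈ ℝ^{r+c}` associated to the (1-indexed) box `(i,j)`. -/
def boxVec (r c : ℕ) (p : ℕ × ℕ) : Fin (r + c) → ℝ :=
  fun t => (if (t : ℕ) = p.1 - 1 then 1 else 0) - (if (t : ℕ) = r + p.2 - 1 then 1 else 0)

/-- One step of a monotone lattice path: the row index decreases by `1`
or the column index increases by `1`. -/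
def PathStep (p q : ℕ × ℕ) : Prop :=
  (q.1 + 1 = p.1 ∧ q.2 = p.2) ∨ (q.1 = p.1 ∧ q.2 = p.2 + 1)

/-- The southwest-most box of `A`: it lies in the largest-index row and
the smallest-index column of `A`. -/
def IsSWBox (A : Set (ℕ × ℕ)) (p : ℕ × ℕ) : Prop :=
  p ∈ A ∧ ∀ q ∈ A, q.1 ≤ p.1 ∧ p.2 ≤ q.2

/-- The northeast-most box of `A`: it lies in the smallest-index row and
the largest-index column of `A`. -/
def IsNEBox (A : Set (ℕ × ℕ)) (p : ℕ × ℕ) : Prop :=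
  p ∈ A ∧ ∀ q ∈ A, p.1 ≤ q.1 ∧ q.2 ≤ p.2

/-- `L` is a monotone lattice path in `A`: a sequence of boxes of `A` starting at the
southwest-most box of `A`, ending at the northeast-most box of `A`, each box obtained
from the previous one by decreasing the row index by `1` or increasing the column
index by `1`. -/
def IsMonoPath (A : Set (ℕ × ℕ)) (L : List (ℕ × ℕ)) : Prop :=
  (∀ p ∈ L, p ∈ A) ∧ List.Chain' PathStep L ∧
  ∃ h : L ≠ [], IsSWBox A (L.head h) ∧ IsNEBox A (L.getLast h)

/-- `q` is joined to `p` by a chain of boxes of `A` successively sharing a row or column. -/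
def LinkedIn (A : Set (ℕ × ℕ)) : ℕ × ℕ → ℕ × ℕ → Prop :=
  Relation.ReflTransGen (fun a b => b ∈ A ∧ (a.1 = b.1 ∨ a.2 = b.2))

/-- The component of `A` containing the box `p`. -/
def component (A : Set (ℕ × ℕ)) (p : ℕ × ℕ) : Set (ℕ × ℕ) :=
  {q | q ∈ A ∧ LinkedIn A p q}


/-!
A noncrossing set of boxes is totally ordered from southwest to northeast, and in that order
each box after the first meets a new row or a new column. Hence a nonempty noncrossing set `T`
meets at least `|T| + 1` rows and columns, with equality exactly when consecutive boxes share a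
row or a column. Boxes in different components share no row or column, so for a spanning
noncrossing `S` summing over the `k` components gives `|S| + k ≤ r + c`; the count
`|S| = r + c - k` forces equality in every component, and since `S` meets every row and column
no step of `S ∩ D_t` can skip one, so it is a monotone lattice path. Conversely, a lattice path
meets exactly one more row or column than it has boxes, skewness puts two crossing boxes of `S`
into one component (where they lie on one path), and noncrossing sets are acyclic.
-/

-- `q` lies weakly northeast of `p`; row indices grow southwards.
def WeakNE (p q : ℕ × ℕ) : Prop := q.1 ≤ p.1 ∧ p.2 ≤ q.2

def NELt (p q : ℕ × ℕ) : Prop := WeakNE p q ∧ p ≠ q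

def SameLine (p q : ℕ × ℕ) : Prop := p.1 = q.1 ∨ p.2 = q.2

instance : DecidableRel SameLine := fun p q => inferInstanceAs (Decidable (p.1 = q.1 ∨ p.2 = q.2))

def Noncrossing (S : Finset (ℕ × ℕ)) : Prop := ∀ p ∈ S, ∀ q ∈ S, ¬(p.1 < q.1 ∧ p.2 < q.2)

/-- The number of vertices of the bipartite graph with edge set `T`. -/
def lineCount (T : Finset (ℕ × ℕ)) : ℕ := (T.image Prod.fst).card + (T.image Prod.snd).card

instance : Std.Refl WeakNE := ⟨fun _ => ⟨le_rfl, le_rfl⟩⟩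

instance : Trans NELt NELt NELt where
  trans := fun ⟨⟨h₁, h₂⟩, hpq⟩ ⟨⟨h₃, h₄⟩, _⟩ =>
    ⟨⟨h₃.trans h₁, h₂.trans h₄⟩, fun hpr => hpq (by subst hpr; ext <;> omega)⟩

lemma NELt.asymm {p q : ℕ × ℕ} (h : NELt p q) (h' : NELt q p) : False :=
  h.2 (Prod.ext (le_antisymm h'.1.1 h.1.1) (le_antisymm h.1.2 h'.1.2))

lemma PathStep.nelt {p q : ℕ × ℕ} (h : PathStep p q) : NELt p q := by
  unfold PathStep at h
  refine ⟨⟨by omega, by omega⟩, fun hpq => ?_⟩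
  subst hpq
  omega

lemma PathStep.sameLine {p q : ℕ × ℕ} (h : PathStep p q) : SameLine p q := by
  unfold PathStep at h
  unfold SameLine
  omega

lemma Noncrossing.weakNE {S : Finset (ℕ × ℕ)} (hS : Noncrossing S) {p q : ℕ × ℕ}
    (hp : p ∈ S) (hq : q ∈ S) (h : p.2 + q.1 ≤ q.2 + p.1) : WeakNE p q := by
  have := hS p hp q hq
  have := hS q hq p hp
  constructor <;> omega

namespace List

variable {l : List (ℕ × ℕ)}

lemma Pairwise.weakNE_total (hl : l.Pairwise WeakNE) {p q : ℕ × ℕ} (hp : p ∈ l) (hq : q ∈ l) :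
    WeakNE p q ∨ WeakNE q p :=
  Pairwise.forall_of_forall_of_flip (R := fun p q => WeakNE p q ∨ WeakNE q p)
    (fun _ _ => Or.inl (refl _)) (hl.imp Or.inl) (hl.imp Or.inr) hp hq

lemma Pairwise.noncrossing_toFinset (hl : l.Pairwise WeakNE) : Noncrossing l.toFinset := by
  intro p hp q hq h
  rcases hl.weakNE_total (mem_toFinset.1 hp) (mem_toFinset.1 hq) with h' | h'
  · exact absurd h'.1 (by omega)
  · exact absurd h'.2 (by omega)

lemma exists_mem_eq_of_isChain {α : Type*} {f : α → ℕ} :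
    ∀ {l : List α}, l.IsChain (fun a b => f b ≤ f a + 1) → (hne : l ≠ []) → ∀ {n : ℕ},
      f (l.head hne) ≤ n → n ≤ f (l.getLast hne) → ∃ x ∈ l, f x = n
  | [a], _, _, _, h₁, h₂ => ⟨a, mem_singleton_self a, by simp at h₁ h₂; omega⟩
  | a :: b :: l, hc, _, n, h₁, h₂ => by
    rw [isChain_cons_cons] at hc
    by_cases han : f a = n
    · exact ⟨a, mem_cons_self, han⟩
    · obtain ⟨x, hx, hxn⟩ := exists_mem_eq_of_isChain hc.2 (cons_ne_nil b l)
        (show f b ≤ n by simp at h₁; omega) (by simpa using h₂)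
      exact ⟨x, mem_cons_of_mem a hx, hxn⟩

lemma Pairwise.card_toFinset (hl : l.Pairwise NELt) : l.toFinset.card = l.length :=
  toFinset_card_of_nodup (hl.imp fun h => h.2)

lemma lineCount_cons_cons {a b : ℕ × ℕ} (hl : (a :: b :: l).Pairwise NELt) :
    lineCount (a :: b :: l).toFinset =
      lineCount (b :: l).toFinset + if SameLine a b then 1 else 2 := by
  have hab : NELt a b := (pairwise_cons.1 hl).1 b mem_cons_self
  have hline : ∀ x ∈ b :: l, (x.1 = a.1 → a.1 = b.1) ∧ (x.2 = a.2 → a.2 = b.2) := by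
    rintro x (_ | ⟨_, hx⟩)
    · exact ⟨Eq.symm, Eq.symm⟩
    · have := ((pairwise_cons.1 hl).1 x (mem_cons_of_mem b hx)).1
      have := ((pairwise_cons.1 (pairwise_cons.1 hl).2).1 x hx).1
      have := hab.1
      unfold WeakNE at *
      omega
  have hrow : a.1 ∈ (b :: l).toFinset.image Prod.fst ↔ a.1 = b.1 :=
    ⟨fun h => by
      obtain ⟨x, hx, hxa⟩ := Finset.mem_image.1 h
      exact (hline x (mem_toFinset.1 hx)).1 hxa,
    fun h => Finset.mem_image.2 ⟨b, by simp, h.symm⟩⟩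
  have hcol : a.2 ∈ (b :: l).toFinset.image Prod.snd ↔ a.2 = b.2 :=
    ⟨fun h => by
      obtain ⟨x, hx, hxa⟩ := Finset.mem_image.1 h
      exact (hline x (mem_toFinset.1 hx)).2 hxa,
    fun h => Finset.mem_image.2 ⟨b, by simp, h.symm⟩⟩
  unfold lineCount
  rw [toFinset_cons (a := a), Finset.image_insert, Finset.image_insert, Finset.card_insert_eq_ite,
    Finset.card_insert_eq_ite]
  simp only [hrow, hcol, SameLine]
  by_cases h₁ : a.1 = b.1 <;> by_cases h₂ : a.2 = b.2
  · exact absurd (Prod.ext h₁ h₂) hab.2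
  all_goals simp [h₁, h₂]; omega

lemma Pairwise.length_add_one_le_lineCount (hl : l.Pairwise NELt) (hne : l ≠ []) :
    l.length + 1 ≤ lineCount l.toFinset := by
  induction l with
  | nil => exact absurd rfl hne
  | cons a l ih =>
    rcases l with _ | ⟨b, l⟩
    · simp [lineCount]
    · have := ih hl.of_cons (cons_ne_nil b l)
      rw [lineCount_cons_cons hl, length_cons]
      split <;> omega

lemma Pairwise.lineCount_eq_iff (hl : l.Pairwise NELt) (hne : l ≠ []) :
    lineCount l.toFinset = l.length + 1 ↔ l.IsChain SameLine := by
  induction l with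
  | nil => exact absurd rfl hne
  | cons a l ih =>
    rcases l with _ | ⟨b, l⟩
    · simp [lineCount]
    · have := hl.of_cons.length_add_one_le_lineCount (cons_ne_nil b l)
      rw [lineCount_cons_cons hl, isChain_cons_cons, ← ih hl.of_cons (cons_ne_nil b l),
        length_cons]
      split <;> simp_all; omega

lemma Pairwise.isChain_pathStep (hl : l.Pairwise NELt) (hs : l.IsChain SameLine)
    (hgap : ∀ a ∈ l, ∀ b ∈ l, NELt a b → SameLine a b → ¬PathStep a b →
      ∃ s ∈ l, NELt a s ∧ NELt s b) :
    l.IsChain PathStep := by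
  induction l with
  | nil => exact .nil
  | cons a l ih =>
    rcases l with _ | ⟨b, l⟩
    · exact .singleton a
    · rw [isChain_cons_cons] at hs ⊢
      have hl' := pairwise_cons.1 hl
      refine ⟨by_contra fun hstep => ?_, ih hl'.2 hs.2 fun x hx y hy hxy hxy' hxy'' => ?_⟩
      · obtain ⟨s, hs', has, hsb⟩ := hgap a mem_cons_self b (mem_cons_of_mem a mem_cons_self)
          (hl'.1 b mem_cons_self) hs.1 hstep
        rcases mem_cons.1 hs' with rfl | hs'
        · exact has.2 rfl
        rcases mem_cons.1 hs' with rfl | hs'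
        · exact hsb.2 rfl
        exact hsb.asymm ((pairwise_cons.1 hl'.2).1 s hs')
      · obtain ⟨s, hs', hxs, hsy⟩ :=
          hgap x (mem_cons_of_mem a hx) y (mem_cons_of_mem a hy) hxy hxy' hxy''
        rcases mem_cons.1 hs' with rfl | hs'
        · exact (hxs.asymm (hl'.1 x hx)).elim
        · exact ⟨s, hs', hxs, hsy⟩

end List

lemma Noncrossing.exists_list {T : Finset (ℕ × ℕ)} (hT : Noncrossing T) :
    ∃ l : List (ℕ × ℕ), l.Pairwise NELt ∧ l.toFinset = T := by
  -- compare the antidiagonals `p.2 - p.1`, written without truncated subtraction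
  let le : ℕ × ℕ → ℕ × ℕ → Bool := fun p q => decide (p.2 + q.1 ≤ q.2 + p.1)
  have hperm := T.toList.mergeSort_perm le
  have hsorted : (T.toList.mergeSort le).Pairwise (fun p q => le p q) :=
    List.pairwise_mergeSort (by simp only [le, decide_eq_true_eq]; omega)
      (by simp only [le, Bool.or_eq_true, decide_eq_true_eq]; omega) _
  have hnodup : (T.toList.mergeSort le).Nodup := hperm.nodup_iff.2 T.nodup_toList
  have hmem : ∀ x, x ∈ T.toList.mergeSort le ↔ x ∈ T := fun x =>
    hperm.mem_iff.trans Finset.mem_toList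
  refine ⟨_, (hsorted.and hnodup).imp_of_mem fun ha hb h => ⟨?_, h.2⟩, by ext; simp [hmem]⟩
  exact hT.weakNE ((hmem _).1 ha) ((hmem _).1 hb) (by simpa [le] using h.1)

lemma Noncrossing.rowColAcyclic {S : Finset (ℕ × ℕ)} (hS : Noncrossing S) : RowColAcyclic S := by
  intro S' hS' hne
  -- a box of `S'` on the most northeastern antidiagonal cannot have both a box of `S'` to its
  -- west and one to its south, since those two would cross
  obtain ⟨p, hp, hmax⟩ := S'.exists_max_image (fun q : ℕ × ℕ => (q.2 : ℤ) - q.1) hne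
  refine ⟨p, hp, ?_⟩
  by_contra! h
  have hmem : ∀ P : ℕ × ℕ → Prop, [DecidablePred P] → P p →
      (S'.filter P).card ≠ 1 → ∃ q ∈ S', P q ∧ q ≠ p := fun P _ hP h1 => by
    have : 1 < (S'.filter P).card :=
      lt_of_le_of_ne (Finset.card_pos.2 ⟨p, Finset.mem_filter.2 ⟨hp, hP⟩⟩) (Ne.symm h1)
    obtain ⟨q, hq, hqp⟩ := Finset.exists_mem_ne this p
    exact ⟨q, (Finset.mem_filter.1 hq).1, (Finset.mem_filter.1 hq).2, hqp⟩
  obtain ⟨x, hx, hxrow, hxp⟩ := hmem (fun q => q.1 = p.1) rfl h.1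
  obtain ⟨y, hy, hycol, hyp⟩ := hmem (fun q => q.2 = p.2) rfl h.2
  have := hmax x hx
  have := hmax y hy
  have hx2 : x.2 < p.2 := by
    have : x.2 ≠ p.2 := fun h => hxp (Prod.ext hxrow h)
    omega
  have hy1 : p.1 < y.1 := by
    have : y.1 ≠ p.1 := fun h => hyp (Prod.ext h hycol)
    omega
  exact hS x (hS' hx) y (hS' hy) ⟨by omega, by omega⟩

section Components

variable {A : Set (ℕ × ℕ)} {p q x y : ℕ × ℕ}

lemma LinkedIn.mem (hp : p ∈ A) (h : LinkedIn A p q) : q ∈ A := by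
  induction h with
  | refl => exact hp
  | tail _ h => exact h.1

lemma LinkedIn.symm (hp : p ∈ A) (h : LinkedIn A p q) : LinkedIn A q p := by
  induction h with
  | refl => exact .refl
  | tail hpb h ih => exact .head ⟨LinkedIn.mem hp hpb, h.2.imp Eq.symm Eq.symm⟩ ih

lemma mem_component_self (hp : p ∈ A) : p ∈ component A p := ⟨hp, .refl⟩

lemma mem_component_of_sameLine (hx : x ∈ component A p) (hy : y ∈ A) (h : SameLine x y) :
    y ∈ component A p :=
  ⟨hy, hx.2.tail ⟨hy, h⟩⟩

lemma component_eq_of_mem (hp : p ∈ A) (hq : q ∈ component A p) :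
    component A q = component A p := by
  ext x
  exact ⟨fun hx => ⟨hx.1, hq.2.trans hx.2⟩, fun hx => ⟨hx.1, (hq.2.symm hp).trans hx.2⟩⟩

lemma sameComp_iff_linkedIn (a b : A) : sameComp A a b ↔ LinkedIn A a b := by
  constructor
  · intro h
    induction h with
    | refl => exact .refl
    | tail _ h ih => exact ih.tail ⟨Subtype.property _, h⟩
  · suffices ∀ y, LinkedIn A a y → ∀ hy : y ∈ A, sameComp A a ⟨y, hy⟩ from
      fun h => this b h b.2
    intro y h
    induction h with
    | refl => exact fun _ => .refl
    | tail hab h ih => exact fun _ => (ih (LinkedIn.mem a.2 hab)).tail h.2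

lemma compCount_eq_card (D : Finset (ℕ × ℕ)) [DecidableEq (Set (ℕ × ℕ))] :
    compCount ↑D = (D.image (component ↑D)).card := by
  let f : Quot (sameComp (↑D : Set (ℕ × ℕ))) → D.image (component ↑D) :=
    Quot.lift (fun a => ⟨component ↑D a, Finset.mem_image_of_mem _ a.2⟩) fun a b h =>
      Subtype.ext ((component_eq_of_mem a.2
        ⟨b.2, (sameComp_iff_linkedIn a b).1 h⟩).symm)
  have hf : Function.Bijective f := by
    refine ⟨fun a b hab => ?_, fun ⟨C, hC⟩ => ?_⟩
    · induction a using Quot.ind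
      induction b using Quot.ind
      rename_i a b
      have hab : component ↑D a = component ↑D b := congrArg Subtype.val hab
      have hb : (b : ℕ × ℕ) ∈ component ↑D a := hab ▸ mem_component_self b.2
      exact Quot.sound ((sameComp_iff_linkedIn a b).2 hb.2)
    · obtain ⟨a, ha, rfl⟩ := Finset.mem_image.1 hC
      exact ⟨Quot.mk _ ⟨a, ha⟩, rfl⟩
  rw [compCount, Nat.card_eq_of_bijective f hf, Nat.card_eq_finsetCard]

end Components

lemma Noncrossing.mono {S T : Finset (ℕ × ℕ)} (hS : Noncrossing S) (hT : T ⊆ S) :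
    Noncrossing T :=
  fun p hp q hq => hS p (hT hp) q (hT hq)

lemma Noncrossing.card_add_one_le_lineCount {T : Finset (ℕ × ℕ)} (hT : Noncrossing T)
    (hne : T.Nonempty) : T.card + 1 ≤ lineCount T := by
  obtain ⟨l, hl, rfl⟩ := hT.exists_list
  rw [hl.card_toFinset]
  exact hl.length_add_one_le_lineCount (by rintro rfl; simp at hne)

lemma lineCount_eq_of_spans {S : Finset (ℕ × ℕ)} {r c : ℕ}
    (hbox : ∀ p ∈ S, 1 ≤ p.1 ∧ p.1 ≤ r ∧ 1 ≤ p.2 ∧ p.2 ≤ c)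
    (hrow : ∀ i, 1 ≤ i → i ≤ r → ∃ j, (i, j) ∈ S)
    (hcol : ∀ j, 1 ≤ j → j ≤ c → ∃ i, (i, j) ∈ S) : lineCount S = r + c := by
  have hfst : S.image Prod.fst = Finset.Icc 1 r := by
    ext i
    simp only [Finset.mem_image, Finset.mem_Icc]
    constructor
    · rintro ⟨p, hp, rfl⟩
      exact ⟨(hbox p hp).1, (hbox p hp).2.1⟩
    · rintro ⟨h₁, h₂⟩
      obtain ⟨j, hj⟩ := hrow i h₁ h₂
      exact ⟨_, hj, rfl⟩
  have hsnd : S.image Prod.snd = Finset.Icc 1 c := by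
    ext j
    simp only [Finset.mem_image, Finset.mem_Icc]
    constructor
    · rintro ⟨p, hp, rfl⟩
      exact ⟨(hbox p hp).2.2.1, (hbox p hp).2.2.2⟩
    · rintro ⟨h₁, h₂⟩
      obtain ⟨i, hi⟩ := hcol j h₁ h₂
      exact ⟨_, hi, rfl⟩
  rw [lineCount, hfst, hsnd, Nat.card_Icc, Nat.card_Icc]
  omega

section Partition

open scoped Classical

variable {D S : Finset (ℕ × ℕ)}

lemma component_eq_of_mem_image {C : Set (ℕ × ℕ)} (hC : C ∈ D.image (component ↑D)) {x : ℕ × ℕ}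
    (hx : x ∈ C) : component ↑D x = C := by
  obtain ⟨p, hp, rfl⟩ := Finset.mem_image.1 hC
  exact component_eq_of_mem hp hx

lemma sum_card_image_filter_mem_component (hS : S ⊆ D) {β : Type*} [DecidableEq β]
    (π : ℕ × ℕ → β) (hπ : ∀ x y, π x = π y → SameLine x y) :
    ∑ C ∈ D.image (component ↑D), ((S.filter (· ∈ C)).image π).card = (S.image π).card := by
  rw [← Finset.card_biUnion]
  · congr 1
    ext b
    simp only [Finset.mem_biUnion, Finset.mem_image, Finset.mem_filter]
    constructor
    · rintro ⟨_, -, x, ⟨hx, -⟩, rfl⟩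
      exact ⟨x, hx, rfl⟩
    · rintro ⟨x, hx, rfl⟩
      exact ⟨_, ⟨x, hS hx, rfl⟩, x, ⟨hx, mem_component_self (hS hx)⟩, rfl⟩
  · intro C hC C' hC' hne
    refine Finset.disjoint_left.2 fun b hb hb' => hne ?_
    obtain ⟨x, hx, rfl⟩ := Finset.mem_image.1 hb
    obtain ⟨x', hx', hxx'⟩ := Finset.mem_image.1 hb'
    rw [Finset.mem_filter] at hx hx'
    have hx'C : x' ∈ C := component_eq_of_mem_image hC hx.2 ▸
      mem_component_of_sameLine (mem_component_self (hS hx.1)) (hS hx'.1) (hπ x x' hxx'.symm)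
    rw [← component_eq_of_mem_image hC hx'C, component_eq_of_mem_image hC' hx'.2]

lemma card_add_card_components (hS : S ⊆ D) :
    S.card + (D.image (component ↑D)).card =
      ∑ C ∈ D.image (component ↑D), ((S.filter (· ∈ C)).card + 1) := by
  rw [Finset.sum_add_distrib, ← Finset.image_id (s := S),
    ← sum_card_image_filter_mem_component hS id fun x y h => Or.inl (congrArg Prod.fst h)]
  simp

lemma sum_lineCount_filter_mem_component (hS : S ⊆ D) :
    ∑ C ∈ D.image (component ↑D), lineCount (S.filter (· ∈ C)) = lineCount S := by
  simp only [lineCount, Finset.sum_add_distrib,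
    sum_card_image_filter_mem_component hS Prod.fst fun _ _ h => Or.inl h,
    sum_card_image_filter_mem_component hS Prod.snd fun _ _ h => Or.inr h]

end Partition

namespace IsMonoPath

variable {A : Set (ℕ × ℕ)} {L : List (ℕ × ℕ)}

lemma pairwise (h : IsMonoPath A L) : L.Pairwise NELt :=
  List.isChain_iff_pairwise.1 (h.2.1.imp fun _ _ => PathStep.nelt)

lemma lineCount_eq (h : IsMonoPath A L) : lineCount L.toFinset = L.length + 1 :=
  (h.pairwise.lineCount_eq_iff h.2.2.1).2 (h.2.1.imp fun _ _ => PathStep.sameLine)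

lemma exists_mem_snd_eq (h : IsMonoPath A L) {x : ℕ × ℕ} (hx : x ∈ A) : ∃ y ∈ L, y.2 = x.2 := by
  obtain ⟨-, hc, hne, hsw, hne'⟩ := h
  refine List.exists_mem_eq_of_isChain (f := Prod.snd) (hc.imp fun p q hpq => ?_) hne
    (hsw.2 x hx).2 (hne'.2 x hx).2
  unfold PathStep at hpq
  omega

lemma exists_mem_fst_eq (h : IsMonoPath A L) {x : ℕ × ℕ} (hx : x ∈ A) : ∃ y ∈ L, y.1 = x.1 := by
  obtain ⟨-, hc, hne, hsw, hne'⟩ := h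
  have hc' : L.reverse.IsChain fun p q => q.1 ≤ p.1 + 1 :=
    List.isChain_reverse.2 (hc.imp fun p q hpq => by unfold PathStep at hpq; omega)
  obtain ⟨y, hy, hyx⟩ := List.exists_mem_eq_of_isChain hc' (by simpa using hne)
    (by simpa using (hne'.2 x hx).1) (by simpa using (hsw.2 x hx).1)
  exact ⟨y, List.mem_reverse.1 hy, hyx⟩

end IsMonoPath

lemma Noncrossing.exists_between_of_not_pathStep {S : Finset (ℕ × ℕ)} {r c : ℕ}
    (hS : Noncrossing S)
    (hbox : ∀ p ∈ S, 1 ≤ p.1 ∧ p.1 ≤ r ∧ 1 ≤ p.2 ∧ p.2 ≤ c)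
    (hrow : ∀ i, 1 ≤ i → i ≤ r → ∃ j, (i, j) ∈ S)
    (hcol : ∀ j, 1 ≤ j → j ≤ c → ∃ i, (i, j) ∈ S)
    {a b : ℕ × ℕ} (ha : a ∈ S) (hb : b ∈ S) (hab : NELt a b) (hline : SameLine a b)
    (hstep : ¬PathStep a b) : ∃ s ∈ S, SameLine a s ∧ NELt a s ∧ NELt s b := by
  obtain ⟨⟨h₁, h₂⟩, hne⟩ := hab
  have hne' : a.1 ≠ b.1 ∨ a.2 ≠ b.2 := by
    by_contra! h
    exact hne (Prod.ext h.1 h.2)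
  have := hbox a ha
  have := hbox b hb
  unfold PathStep at hstep
  unfold SameLine at hline
  -- the box of `S` in the first row or column skipped by the step from `a` to `b` is forced
  -- by noncrossing into the line of `a` and `b`
  rcases hline with hrow' | hcol'
  · obtain ⟨i, hi⟩ := hcol (a.2 + 1) (by omega) (by omega)
    have := hS a ha _ hi
    have := hS _ hi b hb
    refine ⟨_, hi, Or.inl (by omega), ⟨⟨by omega, by omega⟩, ?_⟩, ⟨⟨by omega, by omega⟩, ?_⟩⟩ <;>
      · intro h
        simp only [Prod.ext_iff] at h
        omega
  · obtain ⟨j, hj⟩ := hrow (a.1 - 1) (by omega) (by omega)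
    have := hS _ hj a ha
    have := hS b hb _ hj
    refine ⟨_, hj, Or.inr (by omega), ⟨⟨by omega, by omega⟩, ?_⟩, ⟨⟨by omega, by omega⟩, ?_⟩⟩ <;>
      · intro h
        simp only [Prod.ext_iff] at h
        omega

section Main

open scoped Classical

variable {D S : Finset (ℕ × ℕ)} {r c k : ℕ}

lemma card_add_one_eq_lineCount_of_isNASF (hocc : Occupies ↑D r c) (hk : compCount ↑D = k)
    (h : IsNASF D r c k S) :
    ∀ C ∈ D.image (component ↑D), (S.filter (· ∈ C)).card + 1 = lineCount (S.filter (· ∈ C)) := by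
  obtain ⟨hSD, hcard, hrow, hcol, -, hnc : Noncrossing S⟩ := h
  have hle : ∀ C ∈ D.image (component ↑D),
      (S.filter (· ∈ C)).card + 1 ≤ lineCount (S.filter (· ∈ C)) := by
    intro C hC
    refine (hnc.mono (Finset.filter_subset _ _)).card_add_one_le_lineCount ?_
    obtain ⟨p, hp, rfl⟩ := Finset.mem_image.1 hC
    obtain ⟨j, hj⟩ := hrow p.1 (hocc.1 p hp).1 (hocc.1 p hp).2.1
    exact ⟨_, Finset.mem_filter.2
      ⟨hj, mem_component_of_sameLine (mem_component_self hp) (hSD hj) (Or.inl rfl)⟩⟩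
  have htotal := card_add_card_components hSD
  have hlines := sum_lineCount_filter_mem_component hSD
  rw [lineCount_eq_of_spans (fun p hp => hocc.1 p (hSD hp)) hrow hcol] at hlines
  rw [← compCount_eq_card, hk] at htotal
  have := Finset.sum_le_sum hle
  exact (Finset.sum_eq_sum_iff_of_le hle).1 (by omega)

theorem exists_isMonoPath_of_isNASF (hocc : Occupies ↑D r c) (hk : compCount ↑D = k)
    (h : IsNASF D r c k S) {p : ℕ × ℕ} (hp : p ∈ D) :
    ∃ L : List (ℕ × ℕ), IsMonoPath (component ↑D p) L ∧
      ((↑S : Set (ℕ × ℕ)) ∩ component ↑D p) = {q | q ∈ L} := by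
  have hcount := card_add_one_eq_lineCount_of_isNASF hocc hk h _ (Finset.mem_image_of_mem _ hp)
  obtain ⟨hSD, -, hrow, hcol, -, hnc : Noncrossing S⟩ := h
  set C := component ↑D p
  obtain ⟨l, hl, hlT⟩ := (hnc.mono (Finset.filter_subset (· ∈ C) S)).exists_list
  have hmem : ∀ q, q ∈ l ↔ q ∈ S ∧ q ∈ C := fun q => by
    rw [← List.mem_toFinset, hlT, Finset.mem_filter]
  have hmeet : ∀ x ∈ C, (∃ t ∈ l, t.1 = x.1) ∧ ∃ u ∈ l, u.2 = x.2 := by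
    intro x hx
    have := hocc.1 x hx.1
    obtain ⟨j, hj⟩ := hrow x.1 (by omega) (by omega)
    obtain ⟨i, hi⟩ := hcol x.2 (by omega) (by omega)
    exact ⟨⟨_, (hmem _).2 ⟨hj, mem_component_of_sameLine hx (hSD hj) (Or.inl rfl)⟩, rfl⟩,
      ⟨_, (hmem _).2 ⟨hi, mem_component_of_sameLine hx (hSD hi) (Or.inr rfl)⟩, rfl⟩⟩
  have hne : l ≠ [] := by
    obtain ⟨t, ht, -⟩ := (hmeet p (mem_component_self hp)).1
    exact List.ne_nil_of_mem ht
  have hsame : l.IsChain SameLine := by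
    rw [← hl.lineCount_eq_iff hne, hlT, ← hcount, ← hlT, hl.card_toFinset]
  have hchain : l.IsChain PathStep := hl.isChain_pathStep hsame fun a ha b hb hab hline hstep => by
    obtain ⟨s, hs, has, hs'⟩ := hnc.exists_between_of_not_pathStep
      (fun q hq => hocc.1 q (hSD hq)) hrow hcol
      ((hmem a).1 ha).1 ((hmem b).1 hb).1 hab hline hstep
    exact ⟨s, (hmem s).2 ⟨hs, mem_component_of_sameLine ((hmem a).1 ha).2 (hSD hs) has⟩, hs'⟩
  have hweak : l.Pairwise WeakNE := hl.imp fun h => h.1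
  refine ⟨l, ⟨fun q hq => ((hmem q).1 hq).2, hchain, hne,
    ⟨((hmem _).1 (List.head_mem hne)).2, fun x hx => ?_⟩,
    ⟨((hmem _).1 (List.getLast_mem hne)).2, fun x hx => ?_⟩⟩, ?_⟩
  · obtain ⟨⟨t, ht, htx⟩, u, hu, hux⟩ := hmeet x hx
    exact ⟨htx ▸ (hweak.rel_head ht).1, hux ▸ (hweak.rel_head hu).2⟩
  · obtain ⟨⟨t, ht, htx⟩, u, hu, hux⟩ := hmeet x hx
    exact ⟨htx ▸ (hweak.rel_getLast ht).1, hux ▸ (hweak.rel_getLast hu).2⟩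
  · ext q
    simp [hmem]

theorem isNASF_of_isMonoPath (hskew : IsSkew ↑D) (hocc : Occupies ↑D r c)
    (hk : compCount ↑D = k) (hS : (↑S : Set (ℕ × ℕ)) ⊆ ↑D)
    (H : ∀ p ∈ D, ∃ L : List (ℕ × ℕ), IsMonoPath (component ↑D p) L ∧
      ((↑S : Set (ℕ × ℕ)) ∩ component ↑D p) = {q | q ∈ L}) :
    IsNASF D r c k S := by
  have hSD : S ⊆ D := Finset.coe_subset.1 hS
  have hmem : ∀ p ∈ D, ∃ L : List (ℕ × ℕ), IsMonoPath (component ↑D p) L ∧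
      ∀ q, q ∈ L ↔ q ∈ S ∧ q ∈ component ↑D p := fun p hp => by
    obtain ⟨L, hL, hSL⟩ := H p hp
    exact ⟨L, hL, fun q => (Set.ext_iff.1 hSL q).symm⟩
  have hrow : ∀ i, 1 ≤ i → i ≤ r → ∃ j, (i, j) ∈ S := by
    intro i h₁ h₂
    obtain ⟨j, hj⟩ := hocc.2.1 i h₁ h₂
    obtain ⟨L, hL, hLS⟩ := hmem _ hj
    obtain ⟨y, hy, rfl⟩ := hL.exists_mem_fst_eq (mem_component_self hj)
    exact ⟨y.2, ((hLS y).1 hy).1⟩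
  have hcol : ∀ j, 1 ≤ j → j ≤ c → ∃ i, (i, j) ∈ S := by
    intro j h₁ h₂
    obtain ⟨i, hi⟩ := hocc.2.2 j h₁ h₂
    obtain ⟨L, hL, hLS⟩ := hmem _ hi
    obtain ⟨y, hy, rfl⟩ := hL.exists_mem_snd_eq (mem_component_self hi)
    exact ⟨y.1, ((hLS y).1 hy).1⟩
  have hnc : Noncrossing S := by
    rintro p hp q hq ⟨h₁, h₂⟩
    have hcorner : (p.1, q.2) ∈ (↑D : Set (ℕ × ℕ)) :=
      hskew p (hSD hp) q (hSD hq) p.1 q.2 le_rfl h₁.le h₂.le le_rfl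
    have hpq : q ∈ component ↑D p := mem_component_of_sameLine
      (mem_component_of_sameLine (mem_component_self (hSD hp)) hcorner (Or.inl rfl))
      (hSD hq) (Or.inr rfl)
    obtain ⟨L, hL, hLS⟩ := hmem p (hSD hp)
    exact (hL.pairwise.imp fun h => h.1).noncrossing_toFinset p
      (List.mem_toFinset.2 ((hLS p).2 ⟨hp, mem_component_self (hSD hp)⟩)) q
      (List.mem_toFinset.2 ((hLS q).2 ⟨hq, hpq⟩)) ⟨h₁, h₂⟩
  have hcard : S.card + k = r + c := by
    rw [← hk, compCount_eq_card, card_add_card_components hSD,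
      ← lineCount_eq_of_spans (fun p hp => hocc.1 p (hSD hp)) hrow hcol,
      ← sum_lineCount_filter_mem_component hSD]
    refine Finset.sum_congr rfl fun C hC => ?_
    obtain ⟨p, hp, rfl⟩ := Finset.mem_image.1 hC
    obtain ⟨L, hL, hLS⟩ := hmem p hp
    have hT : S.filter (· ∈ component ↑D p) = L.toFinset := by
      ext q
      rw [Finset.mem_filter, List.mem_toFinset, hLS]
    rw [hT, hL.pairwise.card_toFinset, hL.lineCount_eq]
  exact ⟨hSD, by omega, hrow, hcol, hnc.rowColAcyclic, hnc⟩

end Main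

theorem stmt3_general (D : Finset (ℕ × ℕ)) (r c k : ℕ)
    (hskew : IsSkew (↑D)) (hocc : Occupies (↑D) r c) (hk : compCount (↑D) = k)
    (S : Finset (ℕ × ℕ)) (hS : (↑S : Set (ℕ × ℕ)) ⊆ (↑D : Set (ℕ × ℕ))) :
    IsNASF D r c k S ↔
      ∀ p ∈ D, ∃ L : List (ℕ × ℕ),
        IsMonoPath (component (↑D) p) L ∧
        ((↑S : Set (ℕ × ℕ)) ∩ component (↑D) p) = {q | q ∈ L} :=
  ⟨fun h _ hp => exists_isMonoPath_of_isNASF hocc hk h hp, isNASF_of_isMonoPath hskew hocc hk hS⟩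

theorem stmt3 (D : Finset (ℕ × ℕ)) (r c k : ℕ) (hne : D.Nonempty)
    (hskew : IsSkew (↑D)) (hocc : Occupies (↑D) r c) (hk : compCount (↑D) = k)
    (S : Finset (ℕ × ℕ)) (hS : (↑S : Set (ℕ × ℕ)) ⊆ (↑D : Set (ℕ × ℕ))) :
    IsNASF D r c k S ↔
      ∀ p ∈ D, ∃ L : List (ℕ × ℕ),
        IsMonoPath (component (↑D) p) L ∧
        ((↑S : Set (ℕ × ℕ)) ∩ component (↑D) p) = {q | q ∈ L} :=
  stmt3_general D r c k hskew hocc hk S hS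
end

section
/- Let D be a skew Ferrers diagram occupying exactly rows 1,…,r and columns 1,…,c, whose graph G_D has k components. Define weights w(i,j) = (i − (r+j))² for (i,j) ∈ D, and define f : Q_{G_D} → ℝ by f(p) = max{ t ∈ ℝ : (p,t) ∈ ConvHull{(e_i − e_{r+j}, w(i,j)) : (i,j) ∈ D} ⊆ ℝ^{r+c} × ℝ } (the concave piecewise linear extension of the weights). Then f is concave, f is affine on each simplex Q_S = ConvHull{e_i − e_{r+j} : (i,j) ∈ S} for every noncrossing alternating spanning forest S of G_D with r+c−k edges, and every convex subset of Q_{G_D} on which f is affine is contained in Q_S for some such forest S. In particular, the noncrossing alternating triangulation of Q_{G_D} is a regular triangulation. -/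
open scoped BigOperators

/-- The concave piecewise linear extension of the weights `w(i,j) = (i - (r+j))²`:
`f p` is the largest `t` with `(p,t)` in the convex hull of the lifted vertices. -/
noncomputable def natFun (D : Finset (ℕ × ℕ)) (r c : ℕ) : (Fin (r + c) → ℝ) → ℝ :=
  fun p => sSup {t : ℝ | (p, t) ∈ convexHull ℝ
    ((fun q : ℕ × ℕ => (boxVec r c q, ((q.1 : ℝ) - ((r : ℝ) + (q.2 : ℝ))) ^ 2)) ''
      (↑D : Set (ℕ × ℕ)))}

/-!
The function `f` is the upper envelope of the lifted points `(e_i - e_{r+j}, w(i,j))`: it is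
concave, it lies below every affine function dominating the weights, and it equals such a
function on the hull of the points where the domination is an equality.

The weights satisfy the strict Monge inequality `w(i,j) + w(i',j') < w(i,j') + w(i',j)` for
`i < i'`, `j < j'`. Given a noncrossing spanning forest `S`, solve `α i - β j = w(i,j)` on `S`.
For a box `(i,j)` of `D`, the boxes of `S` in row `i` and in column `j` lie in one component of
`S` (it has as many components as `G_D`), and a noncrossing component is a staircase; along it
the Monge inequality propagates to `w(i,j) ≤ α i - β j`. So `f` is affine on `Q_S`.

Conversely, if `f` is affine on a convex set `A`, the boxes carrying weight in optimal convex
combinations over `A` form a noncrossing set: for crossing boxes `(i,j)`, `(i',j')` the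
exchange with `(i,j')`, `(i',j)`, which lie in `D` by skewness, keeps the point and raises the
height. Any maximal noncrossing subset of `D` containing them meets every row and column and
connects whatever `D` connects, so it is a spanning forest with `r + c - k` edges.
-/

/-! ### Upper envelopes of lifted point sets -/

section UpperEnvelope

open Finset

variable {ι E : Type*}

theorem mem_convexHull_image_iff [AddCommGroup E] [Module ℝ E] {v : ι → E} {s : Finset ι}
    {x : E} : x ∈ convexHull ℝ (v '' ↑s) ↔
      ∃ w : ι → ℝ, (∀ i ∈ s, 0 ≤ w i) ∧ ∑ i ∈ s, w i = 1 ∧ ∑ i ∈ s, w i • v i = x := by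
  classical
  refine ⟨fun hx => ?_, ?_⟩
  · refine convexHull_min (t := {y | ∃ w : ι → ℝ, (∀ i ∈ s, 0 ≤ w i) ∧ ∑ i ∈ s, w i = 1 ∧
      ∑ i ∈ s, w i • v i = y}) ?_ ?_ hx
    · rintro _ ⟨i, hi, rfl⟩
      refine ⟨Pi.single i 1, fun j _ => ?_, ?_, ?_⟩
      · by_cases h : j = i <;> simp [h]
      · simp [Finset.sum_pi_single', Finset.mem_coe.mp hi]
      · simp [Pi.single_apply, ite_smul, Finset.mem_coe.mp hi]
    · rintro _ ⟨w, hw0, hw1, rfl⟩ _ ⟨w', hw0', hw1', rfl⟩ a b ha hb hab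
      refine ⟨a • w + b • w', fun i hi => ?_, ?_, ?_⟩
      · simp only [Pi.add_apply, Pi.smul_apply, smul_eq_mul]
        have := hw0 i hi; have := hw0' i hi; positivity
      · simp [Finset.sum_add_distrib, ← Finset.mul_sum, hw1, hw1', hab]
      · simp [add_smul, mul_smul, Finset.sum_add_distrib, Finset.smul_sum]
  · rintro ⟨w, hw0, hw1, rfl⟩
    rw [← Finset.centerMass_eq_of_sum_1 _ _ hw1]
    exact s.centerMass_mem_convexHull hw0 (by simp [hw1]) fun i hi => ⟨i, hi, rfl⟩

theorem exists_pos_add_smul_mem_convexHull [AddCommGroup E] [Module ℝ E] [DecidableEq ι]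
    {u : ι → E} {s : Finset ι} {w : ι → ℝ} (hw0 : ∀ i ∈ s, 0 ≤ w i) (hw1 : ∑ i ∈ s, w i = 1)
    {d₁ d₂ e₁ e₂ : ι} (hd₁ : d₁ ∈ s) (hd₂ : d₂ ∈ s) (he₁ : e₁ ∈ s) (he₂ : e₂ ∈ s)
    (hd : d₁ ≠ d₂) (hpos₁ : 0 < w d₁) (hpos₂ : 0 < w d₂) :
    ∃ ε : ℝ, 0 < ε ∧
      ∑ i ∈ s, w i • u i + ε • (u e₁ + u e₂ - u d₁ - u d₂) ∈ convexHull ℝ (u '' ↑s) := by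
  set ε := min (w d₁) (w d₂)
  have hε : 0 < ε := lt_min hpos₁ hpos₂
  let δ : ι → ι → ℝ := fun j => Pi.single j 1
  have hδ : ∀ j ∈ s, ∀ m : ι → E, ∑ i ∈ s, δ j i • m i = m j := fun j hj m => by
    simp [δ, Pi.single_apply, ite_smul, hj]
  let w' := w + ε • (δ e₁ + δ e₂ - δ d₁ - δ d₂)
  have hsum : ∀ m : ι → E, ∑ i ∈ s, w' i • m i
      = ∑ i ∈ s, w i • m i + ε • (m e₁ + m e₂ - m d₁ - m d₂) := fun m => by
    simp only [w', Pi.add_apply, Pi.smul_apply, Pi.sub_apply, add_smul, sub_smul, smul_eq_mul,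
      mul_smul, Finset.sum_add_distrib, Finset.sum_sub_distrib, ← Finset.smul_sum, δ,
      hδ e₁ he₁, hδ e₂ he₂, hδ d₁ hd₁, hδ d₂ hd₂, smul_add, smul_sub]
  refine ⟨ε, hε, mem_convexHull_image_iff.mpr ⟨w', fun i hi => ?_, ?_, hsum u⟩⟩
  · have h₁ : ε ≤ w d₁ := min_le_left _ _
    have h₂ : ε ≤ w d₂ := min_le_right _ _
    have := hw0 i hi
    simp only [w', δ, Pi.add_apply, Pi.smul_apply, Pi.sub_apply, Pi.single_apply, smul_eq_mul]
    split_ifs <;> subst_vars <;> first | exact absurd rfl hd | linarith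
  · simp [w', δ, Finset.sum_add_distrib, Finset.sum_sub_distrib, ← Finset.mul_sum,
      Finset.sum_pi_single', hd₁, hd₂, he₁, he₂, hw1]

variable [NormedAddCommGroup E] [NormedSpace ℝ E] {v : ι → E} {h : ι → ℝ} {s : Finset ι}

variable (v h s) in
def liftedHull : Set (E × ℝ) := convexHull ℝ ((fun i => (v i, h i)) '' ↑s)

variable (v h s) in
noncomputable def upperEnvelope (x : E) : ℝ := sSup {t | (x, t) ∈ liftedHull v h s}

theorem bddAbove_liftedHull_slice (x : E) : BddAbove {t | (x, t) ∈ liftedHull v h s} := by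
  have hK : IsCompact (liftedHull v h s) := (s.finite_toSet.image _).isCompact_convexHull ℝ
  refine (hK.image continuous_snd).bddAbove.mono fun t ht => ?_
  exact ⟨(x, t), ht, rfl⟩

theorem le_upperEnvelope {x : E} {t : ℝ} (hx : (x, t) ∈ liftedHull v h s) :
    t ≤ upperEnvelope v h s x :=
  le_csSup (bddAbove_liftedHull_slice x) hx

theorem upperEnvelope_mem_liftedHull {x : E} (hx : x ∈ convexHull ℝ (v '' ↑s)) :
    (x, upperEnvelope v h s x) ∈ liftedHull v h s := by
  have hK : IsClosed (liftedHull v h s) := (s.finite_toSet.image _).isClosed_convexHull ℝ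
  have hfst : Prod.fst '' liftedHull v h s = convexHull ℝ (v '' ↑s) := by
    rw [liftedHull, ← AffineMap.coe_fst (k := ℝ), AffineMap.image_convexHull, Set.image_image]
    rfl
  obtain ⟨⟨y, t⟩, ht, rfl⟩ := hfst ▸ hx
  exact (hK.preimage (Continuous.prodMk_right y)).csSup_mem ⟨t, ht⟩ (bddAbove_liftedHull_slice y)

theorem concaveOn_upperEnvelope : ConcaveOn ℝ (convexHull ℝ (v '' ↑s)) (upperEnvelope v h s) := by
  refine ⟨convex_convexHull ℝ _, fun x hx y hy a b ha hb hab => le_upperEnvelope ?_⟩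
  simpa [liftedHull] using convex_convexHull ℝ _ (upperEnvelope_mem_liftedHull (h := h) hx)
    (upperEnvelope_mem_liftedHull (h := h) hy) ha hb hab

theorem upperEnvelope_le {L : E →ᵃ[ℝ] ℝ} (hL : ∀ i ∈ s, h i ≤ L (v i)) {x : E}
    (hx : x ∈ convexHull ℝ (v '' ↑s)) : upperEnvelope v h s x ≤ L x := by
  have hsub : liftedHull v h s ⊆ {p | p.2 ≤ L p.1} := by
    refine convexHull_min ?_ fun p hp q hq a b ha hb hab => ?_
    · rintro _ ⟨i, hi, rfl⟩
      exact hL i hi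
    · simp only [Set.mem_ofPred_eq, Prod.fst_add, Prod.snd_add, Prod.smul_fst, Prod.smul_snd,
        smul_eq_mul, Convex.combo_affine_apply hab] at hp hq ⊢
      nlinarith
  exact hsub (upperEnvelope_mem_liftedHull hx)

theorem le_upperEnvelope_of_eq {L : E →ᵃ[ℝ] ℝ} {t : Finset ι} (hts : t ⊆ s)
    (hL : ∀ i ∈ t, h i = L (v i)) {x : E} (hx : x ∈ convexHull ℝ (v '' ↑t)) :
    L x ≤ upperEnvelope v h s x := by
  refine le_upperEnvelope (convexHull_mono (Set.image_mono (coe_subset.mpr hts)) ?_)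
  have himg : (fun i => (v i, h i)) '' ↑t = (AffineMap.id ℝ E).prod L '' (v '' ↑t) := by
    rw [Set.image_image]
    exact Set.image_congr fun i hi => by simp [hL i hi]
  rw [himg, ← AffineMap.image_convexHull]
  exact ⟨x, hx, rfl⟩

theorem add_le_add_of_upperEnvelope_eq [DecidableEq ι] {x : E} {w : ι → ℝ}
    (hw0 : ∀ i ∈ s, 0 ≤ w i) (hw1 : ∑ i ∈ s, w i = 1)
    (hwx : ∑ i ∈ s, w i • (v i, h i) = (x, upperEnvelope v h s x))
    {d₁ d₂ e₁ e₂ : ι} (hd₁ : d₁ ∈ s) (hd₂ : d₂ ∈ s) (he₁ : e₁ ∈ s) (he₂ : e₂ ∈ s)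
    (hd : d₁ ≠ d₂) (hpos₁ : 0 < w d₁) (hpos₂ : 0 < w d₂) (hv : v e₁ + v e₂ = v d₁ + v d₂) :
    h e₁ + h e₂ ≤ h d₁ + h d₂ := by
  obtain ⟨ε, hε, hmem⟩ := exists_pos_add_smul_mem_convexHull (u := fun i => (v i, h i))
    hw0 hw1 hd₁ hd₂ he₁ he₂ hd hpos₁ hpos₂
  have hpt : ∑ i ∈ s, w i • (v i, h i) + ε • ((v e₁, h e₁) + (v e₂, h e₂) - (v d₁, h d₁) -
      (v d₂, h d₂)) = (x, upperEnvelope v h s x + ε * (h e₁ + h e₂ - h d₁ - h d₂)) := by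
    rw [hwx, Prod.ext_iff]
    refine ⟨?_, ?_⟩
    · simp [add_sub_assoc, hv]
    · simp [mul_add, sub_eq_add_neg, add_assoc]
  have := le_upperEnvelope (hpt ▸ hmem : _ ∈ liftedHull v h s)
  nlinarith

theorem exists_subset_convexHull_of_upperEnvelope_eq_affine {A : Set E}
    (hA : A ⊆ convexHull ℝ (v '' ↑s)) (hAc : Convex ℝ A) {g : E →ᵃ[ℝ] ℝ}
    (hg : ∀ x ∈ A, upperEnvelope v h s x = g x) :
    ∃ T ⊆ s, A ⊆ convexHull ℝ (v '' ↑T) ∧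
      ∀ d₁ ∈ T, ∀ d₂ ∈ T, d₁ ≠ d₂ → ∀ e₁ ∈ s, ∀ e₂ ∈ s,
        v e₁ + v e₂ = v d₁ + v d₂ → h e₁ + h e₂ ≤ h d₁ + h d₂ := by
  classical
  have hopt : ∀ x ∈ A, ∃ w : ι → ℝ, (∀ i ∈ s, 0 ≤ w i) ∧ ∑ i ∈ s, w i = 1 ∧
      ∑ i ∈ s, w i • (v i, h i) = (x, upperEnvelope v h s x) := fun x hx =>
    mem_convexHull_image_iff.mp (upperEnvelope_mem_liftedHull (hA hx))
  choose! w hw0 hw1 hwx using hopt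
  set T := s.filter fun i => ∃ x ∈ A, 0 < w x i
  refine ⟨T, filter_subset _ _, fun x hx => ?_, ?_⟩
  · have hzero : ∀ i ∈ s, i ∉ T → w x i = 0 := fun i hi hiT =>
      ((hw0 x hx i hi).eq_or_lt.resolve_right fun hpos =>
        hiT (mem_filter.mpr ⟨hi, x, hx, hpos⟩)).symm
    refine mem_convexHull_image_iff.mpr ⟨w x, fun i hi => hw0 x hx i (mem_filter.mp hi).1, ?_, ?_⟩
    · rw [sum_subset (filter_subset _ _) fun i hi hiT => hzero i hi hiT, hw1 x hx]
    · rw [sum_subset (filter_subset _ _) fun i hi hiT => by rw [hzero i hi hiT, zero_smul]]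
      simpa [Prod.fst_sum] using congrArg Prod.fst (hwx x hx)
  · rintro d₁ hd₁ d₂ hd₂ hd e₁ he₁ e₂ he₂ hv
    obtain ⟨hd₁s, x, hx, hx₁⟩ := mem_filter.mp hd₁
    obtain ⟨hd₂s, y, hy, hy₂⟩ := mem_filter.mp hd₂
    -- As the envelope is affine on `A`, averaging optimal weights of `x` and `y` gives optimal
    -- weights of their midpoint, positive at both `d₁` and `d₂`.
    have hm : upperEnvelope v h s ((1 / 2 : ℝ) • x + (1 / 2 : ℝ) • y)
        = (1 / 2 : ℝ) • upperEnvelope v h s x + (1 / 2 : ℝ) • upperEnvelope v h s y := by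
      rw [hg _ (hAc hx hy (by norm_num) (by norm_num) (by norm_num)), hg x hx, hg y hy,
        Convex.combo_affine_apply (by norm_num)]
    refine add_le_add_of_upperEnvelope_eq (x := (1 / 2 : ℝ) • x + (1 / 2 : ℝ) • y)
      (w := (1 / 2 : ℝ) • w x + (1 / 2 : ℝ) • w y)
      (fun i hi => ?_) ?_ ?_ hd₁s hd₂s he₁ he₂ hd ?_ ?_ hv
    · have := hw0 x hx i hi; have := hw0 y hy i hi
      simp only [Pi.add_apply, Pi.smul_apply, smul_eq_mul]; positivity
    · simp [sum_add_distrib, ← mul_sum, hw1 x hx, hw1 y hy]; norm_num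
    · simp only [Pi.add_apply, Pi.smul_apply, add_smul, smul_assoc, sum_add_distrib,
        ← smul_sum, hwx x hx, hwx y hy, hm]
      rfl
    · have := hw0 y hy d₁ hd₁s
      simp only [Pi.add_apply, Pi.smul_apply, smul_eq_mul]; positivity
    · have := hw0 x hx d₂ hd₂s
      simp only [Pi.add_apply, Pi.smul_apply, smul_eq_mul]; positivity

end UpperEnvelope

namespace SkewDiagram

open Relation Function

variable {S D M : Finset (ℕ × ℕ)} {p q a b d : ℕ × ℕ} {r c k : ℕ} {W : ℕ × ℕ → ℝ}

/-! ### Components and forests of box sets -/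

/-- The boxes of `S` are the edges of `G_S`; linked boxes are adjacent edges. -/
def Linked (S : Finset (ℕ × ℕ)) (a b : ℕ × ℕ) : Prop :=
  a ∈ S ∧ b ∈ S ∧ (a.1 = b.1 ∨ a.2 = b.2)

def Conn (S : Finset (ℕ × ℕ)) : ℕ × ℕ → ℕ × ℕ → Prop := ReflTransGen (Linked S)

theorem Linked.symm (h : Linked S a b) : Linked S b a :=
  ⟨h.2.1, h.1, h.2.2.imp Eq.symm Eq.symm⟩

theorem Conn.symm (h : Conn S a b) : Conn S b a :=
  haveI : Std.Symm (Linked S) := ⟨fun _ _ => Linked.symm⟩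
  Std.Symm.symm (r := ReflTransGen (Linked S)) _ _ h

theorem Conn.mono (hSD : S ⊆ D) (h : Conn S a b) : Conn D a b :=
  ReflTransGen.mono (fun _ _ hab => ⟨hSD hab.1, hSD hab.2.1, hab.2.2⟩) _ _ h

theorem sameComp_iff_conn {x y : (↑S : Set (ℕ × ℕ))} : sameComp ↑S x y ↔ Conn S x y := by
  refine ⟨fun h => ?_, fun h => ?_⟩
  · induction h with
    | refl => exact ReflTransGen.refl
    | tail _ hbc ih => exact ih.tail ⟨Finset.mem_coe.mp (Subtype.prop _),
        Finset.mem_coe.mp (Subtype.prop _), hbc⟩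
  · obtain ⟨x, hx⟩ := x
    obtain ⟨y, hy⟩ := y
    change Conn S x y at h
    induction h using ReflTransGen.head_induction_on with
    | refl => exact ReflTransGen.refl
    | head hxz _ ih => exact ReflTransGen.head hxz.2.2 (ih (Finset.mem_coe.mpr hxz.2.1))

theorem sameComp_equivalence : Equivalence (sameComp ↑S) :=
  ⟨fun _ => ReflTransGen.refl, fun h => sameComp_iff_conn.mpr (sameComp_iff_conn.mp h).symm,
    ReflTransGen.trans⟩

theorem mk_eq_mk_iff_conn {x y : (↑S : Set (ℕ × ℕ))} :
    Quot.mk (sameComp ↑S) x = Quot.mk _ y ↔ Conn S x y :=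
  ⟨fun h => sameComp_iff_conn.mp (sameComp_equivalence.eqvGen_iff.mp (Quot.eqvGen_exact h)),
    fun h => Quot.sound (sameComp_iff_conn.mpr h)⟩

def compMap (hSD : S ⊆ D) : Quot (sameComp ↑S) → Quot (sameComp ↑D) :=
  Quot.map (Set.inclusion (Finset.coe_subset.mpr hSD))
    fun _ _ h => sameComp_iff_conn.mpr ((sameComp_iff_conn.mp h).mono hSD)

theorem compMap_injective (hSD : S ⊆ D) (h : ∀ a ∈ S, ∀ b ∈ S, Conn D a b → Conn S a b) :
    Injective (compMap hSD) := by
  rintro ⟨x⟩ ⟨y⟩ hxy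
  exact mk_eq_mk_iff_conn.mpr (h _ x.2 _ y.2 (mk_eq_mk_iff_conn.mp hxy))

theorem conn_of_compMap_injective (hSD : S ⊆ D) (hinj : Injective (compMap hSD))
    (ha : a ∈ S) (hb : b ∈ S) (h : Conn D a b) : Conn S a b :=
  mk_eq_mk_iff_conn.mp (hinj (a₁ := Quot.mk _ ⟨a, ha⟩) (a₂ := Quot.mk _ ⟨b, hb⟩)
    (mk_eq_mk_iff_conn.mpr h))

theorem compMap_surjective (hSD : S ⊆ D) (h : ∀ d ∈ D, ∃ a ∈ S, Conn D a d) :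
    Surjective (compMap hSD) := by
  rintro ⟨⟨d, hd⟩⟩
  obtain ⟨a, ha, had⟩ := h d hd
  exact ⟨Quot.mk _ ⟨a, ha⟩, mk_eq_mk_iff_conn.mpr had⟩

theorem Conn.erase {q₀ : ℕ × ℕ}
    (hq₀ : ∀ y ∈ S, y ≠ p → (y.1 = p.1 ∨ y.2 = p.2) → Conn (S.erase p) q₀ y)
    (h : Conn S a b) (ha : a ≠ p) (hb : b ≠ p) : Conn (S.erase p) a b := by
  have hlift := ReflTransGen.lift' (p := Linked (S.erase p))
    (fun x => if x = p then q₀ else x) (fun x y hxy => ?_) _ _ h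
  · simpa [Function.onFun, ha, hb, Conn] using hlift
  by_cases hx : x = p <;> by_cases hy : y = p <;> simp only [Function.onFun, hx, hy, if_true,
    if_false]
  · exact ReflTransGen.refl
  · subst hx; exact hq₀ y hxy.2.1 hy (hxy.2.2.imp Eq.symm Eq.symm)
  · subst hy; exact (hq₀ x hxy.1 hx hxy.2.2).symm
  · exact ReflTransGen.single ⟨Finset.mem_erase.mpr ⟨hx, hxy.1⟩,
      Finset.mem_erase.mpr ⟨hy, hxy.2.1⟩, hxy.2.2⟩

/-- The edge `p` of `G_S` has an endpoint of degree one. -/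
def IsLeaf (S : Finset (ℕ × ℕ)) (p : ℕ × ℕ) : Prop :=
  (∀ q ∈ S, q.1 = p.1 → q = p) ∨ (∀ q ∈ S, q.2 = p.2 → q = p)

theorem compCount_erase_of_linked (hpS : p ∈ S) (hp : IsLeaf S p) {q₀ : ℕ × ℕ}
    (hq₀ : q₀ ∈ S.erase p) (hq₀p : q₀.1 = p.1 ∨ q₀.2 = p.2) :
    compCount ↑S = compCount ↑(S.erase p) := by
  have hsub := S.erase_subset p
  have hq₀S := Finset.mem_erase.mp hq₀
  have hreach : ∀ y ∈ S, y ≠ p → (y.1 = p.1 ∨ y.2 = p.2) → Conn (S.erase p) q₀ y := by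
    intro y hy hyp hyl
    by_cases hyq : y = q₀
    · exact hyq ▸ ReflTransGen.refl
    refine ReflTransGen.single ⟨hq₀, Finset.mem_erase.mpr ⟨hyp, hy⟩, ?_⟩
    rcases hp with hrow | hcol
    · exact Or.inr ((hq₀p.resolve_left fun h => hq₀S.1 (hrow _ hq₀S.2 h)).trans
        (hyl.resolve_left fun h => hyp (hrow _ hy h)).symm)
    · exact Or.inl ((hq₀p.resolve_right fun h => hq₀S.1 (hcol _ hq₀S.2 h)).trans
        (hyl.resolve_right fun h => hyp (hcol _ hy h)).symm)
  refine (Nat.card_eq_of_bijective _ ⟨compMap_injective hsub fun a ha b hb h =>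
    h.erase hreach (Finset.ne_of_mem_erase ha) (Finset.ne_of_mem_erase hb),
    compMap_surjective hsub fun d hd => ?_⟩).symm
  by_cases hdp : d = p
  · exact ⟨q₀, hq₀, .single (hdp ▸ ⟨hq₀S.2, hpS, hq₀p⟩)⟩
  · exact ⟨d, Finset.mem_erase.mpr ⟨hdp, hd⟩, .refl⟩

theorem compCount_erase_of_isolated (hpS : p ∈ S)
    (hiso : ∀ y ∈ S, y ≠ p → ¬(y.1 = p.1 ∨ y.2 = p.2)) :
    compCount ↑S = compCount ↑(S.erase p) + 1 := by
  have hsub := S.erase_subset p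
  have hinj := compMap_injective hsub fun a ha b hb h =>
    h.erase (q₀ := p) (fun y hy hyp hyl => absurd hyl (hiso y hy hyp))
      (Finset.ne_of_mem_erase ha) (Finset.ne_of_mem_erase hb)
  have hstuck : ∀ b, Conn S p b → b = p := fun b h => by
    induction h with
    | refl => rfl
    | tail _ hyz ih =>
      subst ih
      by_contra hz
      exact hiso _ hyz.2.1 hz (hyz.2.2.imp Eq.symm Eq.symm)
  have hne : ∀ x, Quot.mk _ ⟨p, hpS⟩ ≠ compMap hsub x := by
    rintro ⟨⟨b, hb⟩⟩ h
    exact Finset.ne_of_mem_erase hb (hstuck b (mk_eq_mk_iff_conn.mp h))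
  let φ : Option (Quot (sameComp ↑(S.erase p))) → Quot (sameComp ↑S) :=
    fun o => o.elim (Quot.mk _ ⟨p, hpS⟩) (compMap hsub)
  have hbij : Bijective φ := by
    refine ⟨?_, ?_⟩
    · rintro (_ | x) (_ | y) h
      · rfl
      · exact absurd h (hne y)
      · exact absurd h.symm (hne x)
      · exact congrArg some (hinj h)
    · rintro ⟨⟨d, hd⟩⟩
      by_cases hdp : d = p
      · subst hdp; exact ⟨none, rfl⟩
      · exact ⟨some (Quot.mk _ ⟨d, Finset.mem_erase.mpr ⟨hdp, hd⟩⟩), rfl⟩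
  exact (Nat.card_eq_of_bijective φ hbij).symm.trans Finite.card_option

theorem compCount_erase (hpS : p ∈ S) (hp : IsLeaf S p) :
    compCount ↑S = compCount ↑(S.erase p) +
      if (∃ q ∈ S.erase p, q.1 = p.1) ∨ (∃ q ∈ S.erase p, q.2 = p.2) then 0 else 1 := by
  split_ifs with hn
  · obtain ⟨q₀, hq₀, hq₀p⟩ : ∃ q₀ ∈ S.erase p, q₀.1 = p.1 ∨ q₀.2 = p.2 := by
      rcases hn with ⟨q, hq, h⟩ | ⟨q, hq, h⟩ <;> exact ⟨q, hq, by tauto⟩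
    exact compCount_erase_of_linked hpS hp hq₀ hq₀p
  · refine compCount_erase_of_isolated hpS fun y hy hyp h => hn ?_
    exact h.imp (⟨y, Finset.mem_erase.mpr ⟨hyp, hy⟩, ·⟩) (⟨y, Finset.mem_erase.mpr ⟨hyp, hy⟩, ·⟩)

theorem card_filter_eq_one_iff {α β : Type*} [DecidableEq β] {s : Finset α} {a : α}
    (ha : a ∈ s) (f : α → β) :
    (s.filter fun b => f b = f a).card = 1 ↔ ∀ b ∈ s, f b = f a → b = a := by
  rw [Finset.card_eq_one]
  refine ⟨fun ⟨x, hx⟩ b hb hfb => ?_, fun h => ⟨a, Finset.eq_singleton_iff_unique_mem.mpr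
    ⟨Finset.mem_filter.mpr ⟨ha, rfl⟩, fun b hb => h b (Finset.mem_filter.mp hb).1
      (Finset.mem_filter.mp hb).2⟩⟩⟩
  have hb' : b ∈ ({x} : Finset α) := hx ▸ Finset.mem_filter.mpr ⟨hb, hfb⟩
  have ha' : a ∈ ({x} : Finset α) := hx ▸ Finset.mem_filter.mpr ⟨ha, rfl⟩
  rw [Finset.mem_singleton] at hb' ha'
  rw [hb', ha']

theorem card_image_eq_card_image_erase_add {α β : Type*} [DecidableEq α] [DecidableEq β]
    (f : α → β) {s : Finset α} {a : α} (ha : a ∈ s) :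
    (s.image f).card =
      ((s.erase a).image f).card + if ∃ b ∈ s.erase a, f b = f a then 0 else 1 := by
  conv_lhs => rw [← Finset.insert_erase ha, Finset.image_insert]
  rw [Finset.card_insert_eq_ite]
  simp only [Finset.mem_image]
  split_ifs <;> rfl

theorem _root_.RowColAcyclic.subset {T : Finset (ℕ × ℕ)} (hS : RowColAcyclic S) (hTS : T ⊆ S) :
    RowColAcyclic T :=
  fun S' hS' => hS S' (hS'.trans hTS)

theorem _root_.RowColAcyclic.exists_isLeaf (hS : RowColAcyclic S) (hne : S.Nonempty) :
    ∃ p ∈ S, IsLeaf S p :=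
  let ⟨p, hp, h⟩ := hS S subset_rfl hne
  ⟨p, hp, h.imp (card_filter_eq_one_iff hp Prod.fst).mp (card_filter_eq_one_iff hp Prod.snd).mp⟩

theorem compCount_empty : compCount (∅ : Set (ℕ × ℕ)) = 0 :=
  Nat.card_eq_zero.mpr (Or.inl ⟨by rintro ⟨⟨a, ha⟩⟩; exact ha⟩)

/-- The forest formula: edges plus components equals vertices. -/
theorem _root_.RowColAcyclic.compCount_add_card (hS : RowColAcyclic S) :
    compCount ↑S + S.card = (S.image Prod.fst).card + (S.image Prod.snd).card := by
  induction S using Finset.strongInduction with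
  | H S ih =>
    rcases S.eq_empty_or_nonempty with rfl | hne
    · simp [compCount_empty]
    obtain ⟨p, hpS, hp⟩ := hS.exists_isLeaf hne
    have IH := ih _ (Finset.erase_ssubset hpS) (hS.subset (S.erase_subset p))
    have hleaf : ¬(∃ q ∈ S.erase p, q.1 = p.1) ∨ ¬(∃ q ∈ S.erase p, q.2 = p.2) := by
      refine hp.imp (fun h ⟨q, hq, hqp⟩ => ?_) (fun h ⟨q, hq, hqp⟩ => ?_) <;>
        exact Finset.ne_of_mem_erase hq (h q (Finset.mem_of_mem_erase hq) hqp)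
    rw [compCount_erase hpS hp, card_image_eq_card_image_erase_add Prod.fst hpS,
      card_image_eq_card_image_erase_add Prod.snd hpS, ← Finset.card_erase_add_one hpS]
    by_cases hρ : ∃ q ∈ S.erase p, q.1 = p.1 <;> by_cases hγ : ∃ q ∈ S.erase p, q.2 = p.2 <;>
      simp only [hρ, hγ, if_true, if_false, or_self, or_true, true_or, not_true, not_false_eq_true]
        at hleaf ⊢ <;> omega

/-! ### Noncrossing sets, staircases and potentials -/

def IsNoncrossing (S : Finset (ℕ × ℕ)) : Prop :=
  ∀ p ∈ S, ∀ q ∈ S, ¬(p.1 < q.1 ∧ p.2 < q.2)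

theorem IsNoncrossing.subset {T : Finset (ℕ × ℕ)} (hS : IsNoncrossing S) (hTS : T ⊆ S) :
    IsNoncrossing T :=
  fun p hp q hq => hS p (hTS hp) q (hTS hq)

theorem IsNoncrossing.comparable (hS : IsNoncrossing S) (hp : p ∈ S) (hq : q ∈ S) :
    (p.1 ≤ q.1 ∧ q.2 ≤ p.2) ∨ (q.1 ≤ p.1 ∧ p.2 ≤ q.2) := by
  have := hS p hp q hq
  have := hS q hq p hp
  omega

theorem IsNoncrossing.rowColAcyclic (hS : IsNoncrossing S) : RowColAcyclic S := by
  intro S' hS' hne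
  -- `p` is the rightmost box in the top row of `S'`.
  obtain ⟨p, hp, hmin⟩ := S'.exists_min_image (fun p => toLex (p.1, OrderDual.toDual p.2)) hne
  have hmin' : ∀ q ∈ S', p.1 < q.1 ∨ (p.1 = q.1 ∧ q.2 ≤ p.2) := fun q hq => by
    simpa [Prod.Lex.toLex_le_toLex] using hmin q hq
  refine ⟨p, hp, ?_⟩
  rw [card_filter_eq_one_iff hp Prod.fst, card_filter_eq_one_iff hp Prod.snd]
  by_contra! h
  obtain ⟨⟨z, hz, hz1, hzp⟩, ⟨y, hy, hy2, hyp⟩⟩ := h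
  have hz2 : z.2 < p.2 := by
    have := hmin' z hz
    exact lt_of_le_of_ne (by omega) fun h2 => hzp (Prod.ext hz1 h2)
  have hy1 : p.1 < y.1 := by
    have := hmin' y hy
    exact this.resolve_right fun h1 => hyp (Prod.ext h1.1.symm hy2)
  exact hS.subset hS' z hz y hy ⟨hz1 ▸ hy1, hy2 ▸ hz2⟩

/-- `b` lies weakly south-west of `a`, rows being numbered downwards. -/
def StairStep (S : Finset (ℕ × ℕ)) (a b : ℕ × ℕ) : Prop :=
  Linked S a b ∧ a.1 ≤ b.1 ∧ b.2 ≤ a.2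

def Stair (S : Finset (ℕ × ℕ)) : ℕ × ℕ → ℕ × ℕ → Prop := ReflTransGen (StairStep S)

theorem Stair.le (h : Stair S a b) : a.1 ≤ b.1 ∧ b.2 ≤ a.2 := by
  induction h with
  | refl => exact ⟨le_rfl, le_rfl⟩
  | tail _ hyz ih => exact ⟨ih.1.trans hyz.2.1, hyz.2.2.trans ih.2⟩

theorem IsNoncrossing.stair_head_of_between (hS : IsNoncrossing S) (hp : p ∈ S)
    {z : ℕ × ℕ} (h : Stair S z q) (hzp : z.1 ≤ p.1 ∧ p.2 ≤ z.2)
    (hpq : p.1 ≤ q.1 ∧ q.2 ≤ p.2) : Stair S p q := by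
  induction h using ReflTransGen.head_induction_on with
  | refl =>
    obtain rfl : p = q := Prod.ext (by omega) (by omega)
    exact ReflTransGen.refl
  | @head x y hxy hyq ih =>
    rcases hS.comparable hxy.1.2.1 hp with hyp | ⟨hpy₁, hpy₂⟩
    · exact ih hyp
    · have hshare : p.1 = y.1 ∨ p.2 = y.2 := by rcases hxy.1.2.2 with h | h <;> omega
      exact ReflTransGen.head ⟨⟨hp, hxy.1.2.1, hshare⟩, hpy₁, hpy₂⟩ hyq

theorem IsNoncrossing.stair_tail_of_between (hS : IsNoncrossing S) (hp : p ∈ S)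
    {z : ℕ × ℕ} (h : Stair S q z) (hqp : q.1 ≤ p.1 ∧ p.2 ≤ q.2)
    (hpz : p.1 ≤ z.1 ∧ z.2 ≤ p.2) : Stair S q p := by
  induction h with
  | refl =>
    obtain rfl : q = p := Prod.ext (by omega) (by omega)
    exact ReflTransGen.refl
  | @tail x y hqx hxy ih =>
    rcases hS.comparable hp hxy.1.1 with hpx | ⟨hxp₁, hxp₂⟩
    · exact ih hpx
    · have hshare : x.1 = p.1 ∨ x.2 = p.2 := by rcases hxy.1.2.2 with h | h <;> omega
      exact ReflTransGen.tail hqx ⟨⟨hxy.1.1, hp, hshare⟩, hxp₁, hxp₂⟩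

theorem IsNoncrossing.stair_of_conn (hS : IsNoncrossing S) (ha : a ∈ S) (h : Conn S a b) :
    Stair S a b ∨ Stair S b a := by
  induction h with
  | refl => exact Or.inl ReflTransGen.refl
  | @tail y z _ hyz ih =>
    have hy := hyz.1
    have hz := hyz.2.1
    have single : ∀ {u v}, Linked S u v → u.1 ≤ v.1 → v.2 ≤ u.2 → Stair S u v :=
      fun huv h₁ h₂ => ReflTransGen.single ⟨huv, h₁, h₂⟩
    rcases ih with hay | hya
    · obtain ⟨hay₁, hay₂⟩ := hay.le
      rcases hS.comparable hy hz with hyz' | hzy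
      · exact Or.inl (hay.tail ⟨hyz, hyz'⟩)
      rcases hS.comparable ha hz with haz | hza
      · exact Or.inl (hS.stair_tail_of_between hz hay haz hzy)
      · have : z.1 = a.1 ∨ z.2 = a.2 := by rcases hyz.2.2 with h | h <;> omega
        exact Or.inr (single ⟨hz, ha, this⟩ hza.1 hza.2)
    · obtain ⟨hya₁, hya₂⟩ := hya.le
      rcases hS.comparable hz hy with hzy | hyz'
      · exact Or.inr (ReflTransGen.head ⟨hyz.symm, hzy⟩ hya)
      rcases hS.comparable hz ha with hza | haz
      · exact Or.inr (hS.stair_head_of_between hz hya hyz' hza)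
      · have : a.1 = z.1 ∨ a.2 = z.2 := by rcases hyz.2.2 with h | h <;> omega
        exact Or.inl (single ⟨ha, hz, this⟩ haz.1 haz.2)

def IsMonge (W : ℕ × ℕ → ℝ) : Prop :=
  ∀ i i' j j' : ℕ, i ≤ i' → j ≤ j' → W (i, j) + W (i', j') ≤ W (i, j') + W (i', j)

def IsStrictMonge (W : ℕ × ℕ → ℝ) : Prop :=
  ∀ i i' j j' : ℕ, i < i' → j < j' → W (i, j) + W (i', j') < W (i, j') + W (i', j)

theorem IsStrictMonge.isMonge {W : ℕ × ℕ → ℝ} (hW : IsStrictMonge W) : IsMonge W := by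
  intro i i' j j' hi hj
  rcases hi.lt_or_eq with hi | rfl
  · rcases hj.lt_or_eq with hj | rfl
    · exact (hW i i' j j' hi hj).le
    · exact le_rfl
  · exact (add_comm _ _).le

theorem _root_.RowColAcyclic.exists_potential (hS : RowColAcyclic S) (W : ℕ × ℕ → ℝ) :
    ∃ α β : ℕ → ℝ, ∀ d ∈ S, W d = α d.1 - β d.2 := by
  induction S using Finset.strongInduction with
  | H S ih =>
    rcases S.eq_empty_or_nonempty with rfl | hne
    · exact ⟨0, 0, by simp⟩
    obtain ⟨p, hpS, hp⟩ := hS.exists_isLeaf hne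
    obtain ⟨α, β, hαβ⟩ :=
      ih _ (Finset.erase_ssubset hpS) (hS.subset (S.erase_subset p))
    have hrest : ∀ d ∈ S, d ≠ p → W d = α d.1 - β d.2 := fun d hd hdp =>
      hαβ d (Finset.mem_erase.mpr ⟨hdp, hd⟩)
    rcases hp with hrow | hcol
    · refine ⟨update α p.1 (W p + β p.2), β, fun d hd => ?_⟩
      by_cases hdp : d = p
      · subst hdp; simp
      · rw [update_of_ne fun h => hdp (hrow d hd h), hrest d hd hdp]
    · refine ⟨α, update β p.2 (α p.1 - W p), fun d hd => ?_⟩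
      by_cases hdp : d = p
      · subst hdp; simp
      · rw [update_of_ne fun h => hdp (hcol d hd h), hrest d hd hdp]

theorem Stair.corner_le {W : ℕ × ℕ → ℝ} (hW : IsMonge W) {α β : ℕ → ℝ}
    (hαβ : ∀ d ∈ S, W d = α d.1 - β d.2) (h : Stair S p q) (hp : p ∈ S) :
    W (p.1, q.2) ≤ α p.1 - β q.2 ∧ W (q.1, p.2) ≤ α q.1 - β p.2 := by
  induction h with
  | refl => simp [hαβ p hp]
  | @tail y z hpy hyz ih =>
    obtain ⟨⟨hy, hz, hline⟩, hyz₁, hyz₂⟩ := hyz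
    obtain ⟨hpy₁, hpy₂⟩ := Stair.le hpy
    obtain ⟨y₁, y₂⟩ := y
    obtain ⟨z₁, z₂⟩ := z
    have hWy := hαβ _ hy
    have hWz := hαβ _ hz
    dsimp only at *
    rcases hline with rfl | rfl
    · exact ⟨by linarith [hW p.1 y₁ z₂ y₂ hpy₁ hyz₂, ih.1], ih.2⟩
    · exact ⟨ih.1, by linarith [hW y₁ z₁ y₂ p.2 hyz₁ hpy₂, ih.2]⟩

/-! ### Skew diagrams and their maximal noncrossing subsets -/

theorem _root_.IsSkew.mem (hD : IsSkew (↑D : Set (ℕ × ℕ))) (hp : p ∈ D) (hq : q ∈ D) {i j : ℕ}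
    (h₁ : p.1 ≤ i) (h₂ : i ≤ q.1) (h₃ : p.2 ≤ j) (h₄ : j ≤ q.2) : (i, j) ∈ D :=
  hD p hp q hq i j h₁ h₂ h₃ h₄

theorem _root_.IsSkew.lt_of_not_conn (hD : IsSkew (↑D : Set (ℕ × ℕ))) (ha : a ∈ D) (hb : b ∈ D)
    (h : ¬Conn D a b) : (a.1 < b.1 ∧ b.2 < a.2) ∨ (b.1 < a.1 ∧ a.2 < b.2) := by
  have hab : ¬(a.1 ≤ b.1 ∧ a.2 ≤ b.2) := fun ⟨h₁, h₂⟩ =>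
    have hm := hD.mem ha hb le_rfl h₁ h₂ le_rfl
    h (.head ⟨ha, hm, .inl rfl⟩ (.single ⟨hm, hb, .inr rfl⟩))
  have hba : ¬(b.1 ≤ a.1 ∧ b.2 ≤ a.2) := fun ⟨h₁, h₂⟩ =>
    have hm := hD.mem hb ha le_rfl h₁ h₂ le_rfl
    h (.head ⟨ha, hm, .inr rfl⟩ (.single ⟨hm, hb, .inl rfl⟩))
  omega

theorem _root_.IsSkew.conn_of_between (hD : IsSkew (↑D : Set (ℕ × ℕ))) (hp : p ∈ D) (ha : a ∈ D)
    (hpq : Conn D p q) (h₁ : p.1 ≤ a.1) (h₂ : a.1 ≤ q.1) (h₃ : a.2 ≤ p.2) :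
    Conn D p a := by
  by_contra hpa
  have hside : ∀ y, Conn D p y → y.1 < a.1 ∧ a.2 < y.2 := by
    intro y hy
    induction hy with
    | refl => have := hD.lt_of_not_conn hp ha hpa; omega
    | @tail y y' hpy hyy' ih =>
      have hy' : ¬Conn D a y' := fun h => hpa ((hpy.tail hyy').trans h.symm)
      have := hD.lt_of_not_conn ha hyy'.2.1 hy'
      rcases hyy'.2.2 with h | h <;> omega
  have := hside q hpq
  omega

theorem _root_.IsSkew.exists_mem_rectangle (hD : IsSkew (↑D : Set (ℕ × ℕ))) (hp : p ∈ D)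
    (hq : q ∈ D) (h₁ : p.1 < q.1) (h₂ : q.2 < p.2) (hpq : Conn D p q) :
    ∃ d ∈ D, p.1 ≤ d.1 ∧ d.1 ≤ q.1 ∧ q.2 ≤ d.2 ∧ d.2 ≤ p.2 ∧ d ≠ p ∧ d ≠ q := by
  by_contra! hR
  -- The box of the rectangle nearest to `m` lies in `D`, so it is `p` or `q`.
  have hside : ∀ m ∈ D, (m.1 ≤ p.1 ∧ p.2 ≤ m.2) ∨ (q.1 ≤ m.1 ∧ m.2 ≤ q.2) := by
    intro m hm
    obtain ⟨n, hn⟩ : ∃ n : ℕ × ℕ, n = (max p.1 (min m.1 q.1), max q.2 (min m.2 p.2)) := ⟨_, rfl⟩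
    have hn₁ : n.1 = max p.1 (min m.1 q.1) := by rw [hn]
    have hn₂ : n.2 = max q.2 (min m.2 p.2) := by rw [hn]
    have hnD : n ∈ D := by
      have : (m.1 ≤ n.1 ∧ n.1 ≤ q.1 ∧ m.2 ≤ n.2 ∧ n.2 ≤ q.2) ∨
          (m.1 ≤ n.1 ∧ n.1 ≤ p.1 ∧ m.2 ≤ n.2 ∧ n.2 ≤ p.2) ∨
          (p.1 ≤ n.1 ∧ n.1 ≤ m.1 ∧ p.2 ≤ n.2 ∧ n.2 ≤ m.2) ∨
          (q.1 ≤ n.1 ∧ n.1 ≤ m.1 ∧ q.2 ≤ n.2 ∧ n.2 ≤ m.2) ∨ n = m ∨ n = p ∨ n = q := by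
        simp only [Prod.ext_iff]; omega
      rcases this with h | h | h | h | rfl | rfl | rfl
      · exact hD.mem hm hq h.1 h.2.1 h.2.2.1 h.2.2.2
      · exact hD.mem hm hp h.1 h.2.1 h.2.2.1 h.2.2.2
      · exact hD.mem hp hm h.1 h.2.1 h.2.2.1 h.2.2.2
      · exact hD.mem hq hm h.1 h.2.1 h.2.2.1 h.2.2.2
      all_goals assumption
    have := hR n hnD (by omega) (by omega) (by omega) (by omega)
    by_cases hnp : n = p
    · simp only [Prod.ext_iff] at hnp; omega
    · have := this hnp
      simp only [Prod.ext_iff] at this; omega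
  have hstay : ∀ y, Conn D p y → y.1 ≤ p.1 ∧ p.2 ≤ y.2 := by
    intro y hy
    induction hy with
    | refl => omega
    | @tail y y' _ hyy' ih =>
      have := hside y' hyy'.2.1
      rcases hyy'.2.2 with h | h <;> omega
  have := hstay q hpq
  omega

theorem IsNoncrossing.insert_iff (hM : IsNoncrossing M) :
    IsNoncrossing (insert d M) ↔ ∀ y ∈ M, ¬(d.1 < y.1 ∧ d.2 < y.2) ∧ ¬(y.1 < d.1 ∧ y.2 < d.2) := by
  refine ⟨fun h y hy => ⟨h d (M.mem_insert_self d) y (M.mem_insert_of_mem hy),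
    h y (M.mem_insert_of_mem hy) d (M.mem_insert_self d)⟩, fun h x hx y hy => ?_⟩
  rcases Finset.mem_insert.mp hx with rfl | hxM <;>
    rcases Finset.mem_insert.mp hy with rfl | hyM
  · omega
  · exact (h y hyM).1
  · exact (h x hxM).2
  · exact hM x hxM y hyM

theorem IsNoncrossing.image_swap (hS : IsNoncrossing S) : IsNoncrossing (S.image Prod.swap) := by
  simp only [IsNoncrossing, Finset.mem_image]
  rintro _ ⟨p, hp, rfl⟩ _ ⟨q, hq, rfl⟩ ⟨h₁, h₂⟩
  exact hS p hp q hq ⟨h₂, h₁⟩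

theorem _root_.IsSkew.image_swap (hD : IsSkew (↑D : Set (ℕ × ℕ))) :
    IsSkew (↑(D.image Prod.swap) : Set (ℕ × ℕ)) := by
  simp only [IsSkew, Finset.coe_image, Set.mem_image, Finset.mem_coe]
  rintro _ ⟨p, hp, rfl⟩ _ ⟨q, hq, rfl⟩ i j h₁ h₂ h₃ h₄
  exact ⟨(j, i), hD.mem hp hq h₃ h₄ h₁ h₂, rfl⟩

def IsMaxNoncrossing (D M : Finset (ℕ × ℕ)) : Prop :=
  M ⊆ D ∧ IsNoncrossing M ∧ ∀ d ∈ D, d ∉ M → ¬IsNoncrossing (insert d M)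

theorem exists_isMaxNoncrossing_superset {T : Finset (ℕ × ℕ)} (hTD : T ⊆ D)
    (hT : IsNoncrossing T) : ∃ M, T ⊆ M ∧ IsMaxNoncrossing D M := by
  classical
  obtain ⟨M, hTM, hM, hmax⟩ := (D.powerset.filter IsNoncrossing).exists_le_maximal
    (Finset.mem_filter.mpr ⟨Finset.mem_powerset.mpr hTD, hT⟩)
  obtain ⟨hMD, hMnc⟩ := Finset.mem_filter.mp hM
  refine ⟨M, hTM, Finset.mem_powerset.mp hMD, hMnc, fun d hd hdM hins => hdM ?_⟩
  exact hmax (Finset.mem_filter.mpr ⟨Finset.mem_powerset.mpr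
    (Finset.insert_subset hd (Finset.mem_powerset.mp hMD)), hins⟩)
    (Finset.subset_insert d M) (Finset.mem_insert_self d M)

theorem IsMaxNoncrossing.image_swap (hM : IsMaxNoncrossing D M) :
    IsMaxNoncrossing (D.image Prod.swap) (M.image Prod.swap) := by
  classical
  refine ⟨Finset.image_subset_image hM.1, hM.2.1.image_swap, ?_⟩
  simp only [Finset.mem_image]
  rintro _ ⟨d, hd, rfl⟩ hdM hins
  refine hM.2.2 d hd (fun h => hdM ⟨d, h, rfl⟩) ?_
  simpa [Finset.image_insert, Finset.image_image] using hins.image_swap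

theorem IsMaxNoncrossing.exists_mem_row (hD : IsSkew (↑D : Set (ℕ × ℕ)))
    (hM : IsMaxNoncrossing D M) (hd : d ∈ D) : ∃ j, (d.1, j) ∈ M := by
  classical
  by_contra! hrow
  set i := d.1
  have hcross : ∀ j, (i, j) ∈ D → (∃ z ∈ M, z.1 < i ∧ z.2 < j) ∨ ∃ z ∈ M, i < z.1 ∧ j < z.2 := by
    intro j hj
    obtain ⟨z, hz, h⟩ := not_forall₂.mp (mt hM.2.1.insert_iff.mpr (hM.2.2 _ hj (hrow j)))
    rcases not_and_or.mp h with h | h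
    · exact Or.inr ⟨z, hz, not_not.mp h⟩
    · exact Or.inl ⟨z, hz, not_not.mp h⟩
  set J := (D.filter (·.1 = i)).image Prod.snd
  have hJ : ∀ {j}, j ∈ J ↔ (i, j) ∈ D := by
    simp [J, i, eq_comm]
  have hJne : J.Nonempty := ⟨d.2, hJ.mpr hd⟩
  -- The leftmost box of row `i` is not crossed from the north-west. The rightmost box `(i, j)`
  -- with this property is crossed from the south-east by some `z`; then `(i, z.2)` is crossed
  -- from the north-west by a box that crosses `z`.
  have hleft : ¬∃ z ∈ M, z.1 < i ∧ z.2 < J.min' hJne := by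
    rintro ⟨z, hz, h₁, h₂⟩
    have hzJ : z.2 ∈ J := hJ.mpr (hD.mem (hM.1 hz) (hJ.mp (J.min'_mem hJne)) h₁.le le_rfl
      le_rfl h₂.le)
    exact absurd (J.min'_le _ hzJ) (not_le.mpr h₂)
  set J' := J.filter fun j => ¬∃ z ∈ M, z.1 < i ∧ z.2 < j
  have hJ'ne : J'.Nonempty := ⟨_, Finset.mem_filter.mpr ⟨J.min'_mem hJne, hleft⟩⟩
  obtain ⟨hj, hjL⟩ := Finset.mem_filter.mp (J'.max'_mem hJ'ne)
  obtain ⟨z, hz, hz₁, hz₂⟩ := (hcross _ (hJ.mp hj)).resolve_left hjL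
  have hzJ : z.2 ∈ J := hJ.mpr (hD.mem (hJ.mp hj) (hM.1 hz) le_rfl hz₁.le hz₂.le le_rfl)
  obtain ⟨z', hz', h₁, h₂⟩ : ∃ z' ∈ M, z'.1 < i ∧ z'.2 < z.2 := by
    by_contra h
    exact absurd (J'.le_max' _ (Finset.mem_filter.mpr ⟨hzJ, h⟩)) (not_le.mpr hz₂)
  exact hM.2.1 z' hz' z hz ⟨h₁.trans hz₁, h₂⟩

theorem IsMaxNoncrossing.exists_mem_col (hD : IsSkew (↑D : Set (ℕ × ℕ)))
    (hM : IsMaxNoncrossing D M) (hd : d ∈ D) : ∃ i, (i, d.2) ∈ M := by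
  classical
  obtain ⟨i, hi⟩ := hM.image_swap.exists_mem_row hD.image_swap (Finset.mem_image_of_mem _ hd)
  obtain ⟨m, hm, hmi⟩ := Finset.mem_image.mp hi
  exact ⟨i, by rwa [← Prod.swap_swap m, hmi] at hm⟩

theorem IsNoncrossing.insert_of_rectangle (hM : IsNoncrossing M) (hp : p ∈ M) (hq : q ∈ M)
    (hempty : ∀ z ∈ M, p.1 ≤ z.1 → z.1 ≤ q.1 → q.2 ≤ z.2 → z.2 ≤ p.2 → z = p ∨ z = q)
    (h₁ : p.1 ≤ d.1) (h₂ : d.1 ≤ q.1) (h₃ : q.2 ≤ d.2) (h₄ : d.2 ≤ p.2) :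
    IsNoncrossing (insert d M) := by
  refine hM.insert_iff.mpr fun y hy => ?_
  rcases hM.comparable hy hp with hyp | hpy
  · omega
  rcases hM.comparable hy hq with hyq | hqy
  · rcases hempty y hy hpy.1 hyq.1 hyq.2 hpy.2 with rfl | rfl <;> omega
  · omega

theorem IsMaxNoncrossing.conn (hD : IsSkew (↑D : Set (ℕ × ℕ))) (hM : IsMaxNoncrossing D M)
    (hp : p ∈ M) (hq : q ∈ M) (h : Conn D p q) : Conn M p q := by
  suffices key : ∀ n p q, p ∈ M → q ∈ M → p.1 ≤ q.1 → q.2 ≤ p.2 →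
      q.1 - p.1 + (p.2 - q.2) = n → Conn D p q → Conn M p q by
    rcases hM.2.1.comparable hp hq with h' | h'
    · exact key _ p q hp hq h'.1 h'.2 rfl h
    · exact (key _ q p hq hp h'.1 h'.2 rfl h.symm).symm
  intro n
  induction n using Nat.strong_induction_on with
  | _ n ih =>
  intro p q hp hq h₁ h₂ hn hpq
  by_cases hline : p.1 = q.1 ∨ p.2 = q.2
  · exact ReflTransGen.single ⟨hp, hq, hline⟩
  by_cases hz : ∃ z ∈ M, p.1 ≤ z.1 ∧ z.1 ≤ q.1 ∧ q.2 ≤ z.2 ∧ z.2 ≤ p.2 ∧ z ≠ p ∧ z ≠ q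
  · obtain ⟨z, hz, hz₁, hz₂, hz₃, hz₄, hzp, hzq⟩ := hz
    have hpz := hD.conn_of_between (hM.1 hp) (hM.1 hz) hpq hz₁ hz₂ hz₄
    rw [Ne, Prod.ext_iff] at hzp hzq
    exact (ih _ (by omega) p z hp hz hz₁ hz₄ rfl hpz).trans
      (ih _ (by omega) z q hz hq hz₂ hz₃ rfl (hpz.symm.trans hpq))
  · push Not at hz
    obtain ⟨d, hd, hd₁, hd₂, hd₃, hd₄, hdp, hdq⟩ :=
      hD.exists_mem_rectangle (hM.1 hp) (hM.1 hq) (by omega) (by omega) hpq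
    refine absurd (hM.2.1.insert_of_rectangle hp hq (fun z hzM h₁ h₂ h₃ h₄ => ?_) hd₁ hd₂ hd₃ hd₄)
      (hM.2.2 d hd fun hdM => hdq (hz d hdM hd₁ hd₂ hd₃ hd₄ hdp))
    by_cases hzp : z = p
    · exact Or.inl hzp
    · exact Or.inr (hz z hzM h₁ h₂ h₃ h₄ hzp)

/-! ### Noncrossing alternating spanning forests -/

theorem image_fst_eq_Icc (hocc : Occupies (↑D : Set (ℕ × ℕ)) r c) (hSD : S ⊆ D)
    (hrows : ∀ i, 1 ≤ i → i ≤ r → ∃ j, (i, j) ∈ S) : S.image Prod.fst = Finset.Icc 1 r := by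
  ext i
  simp only [Finset.mem_image, Finset.mem_Icc]
  refine ⟨?_, fun ⟨h₁, h₂⟩ => let ⟨j, hj⟩ := hrows i h₁ h₂; ⟨_, hj, rfl⟩⟩
  rintro ⟨d, hd, rfl⟩
  exact ⟨(hocc.1 d (hSD hd)).1, (hocc.1 d (hSD hd)).2.1⟩

theorem image_snd_eq_Icc (hocc : Occupies (↑D : Set (ℕ × ℕ)) r c) (hSD : S ⊆ D)
    (hcols : ∀ j, 1 ≤ j → j ≤ c → ∃ i, (i, j) ∈ S) : S.image Prod.snd = Finset.Icc 1 c := by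
  ext j
  simp only [Finset.mem_image, Finset.mem_Icc]
  refine ⟨?_, fun ⟨h₁, h₂⟩ => let ⟨i, hi⟩ := hcols j h₁ h₂; ⟨_, hi, rfl⟩⟩
  rintro ⟨d, hd, rfl⟩
  exact ⟨(hocc.1 d (hSD hd)).2.2.1, (hocc.1 d (hSD hd)).2.2.2⟩

theorem compCount_add_card_eq (hocc : Occupies (↑D : Set (ℕ × ℕ)) r c) (hSD : S ⊆ D)
    (hrows : ∀ i, 1 ≤ i → i ≤ r → ∃ j, (i, j) ∈ S) (hcols : ∀ j, 1 ≤ j → j ≤ c → ∃ i, (i, j) ∈ S)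
    (hS : RowColAcyclic S) : compCount ↑S + S.card = r + c := by
  rw [hS.compCount_add_card, image_fst_eq_Icc hocc hSD hrows, image_snd_eq_Icc hocc hSD hcols,
    Nat.card_Icc, Nat.card_Icc, Nat.add_sub_cancel, Nat.add_sub_cancel]

theorem compMap_surjective_of_rows (hocc : Occupies (↑D : Set (ℕ × ℕ)) r c) (hSD : S ⊆ D)
    (hrows : ∀ i, 1 ≤ i → i ≤ r → ∃ j, (i, j) ∈ S) : Surjective (compMap hSD) :=
  compMap_surjective hSD fun d hd =>
    let ⟨j, hj⟩ := hrows d.1 (hocc.1 d hd).1 (hocc.1 d hd).2.1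
    ⟨(d.1, j), hj, .single ⟨hSD hj, hd, .inl rfl⟩⟩

/-- By the forest formula `S` has `k` components, so no two components of `S` merge in `D`. -/
theorem _root_.IsNASF.conn (hocc : Occupies (↑D : Set (ℕ × ℕ)) r c)
    (hk : compCount (↑D : Set (ℕ × ℕ)) = k) (hS : IsNASF D r c k S) (ha : a ∈ S) (hb : b ∈ S)
    (h : Conn D a b) : Conn S a b := by
  obtain ⟨hSD, hcard, hrows, hcols, hacyc, -⟩ := hS
  have hsurj := compMap_surjective_of_rows hocc hSD hrows
  have hle : compCount ↑D ≤ compCount ↑S := Nat.card_le_card_of_surjective _ hsurj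
  have hsum := compCount_add_card_eq hocc hSD hrows hcols hacyc
  have hbij := (Nat.bijective_iff_surjective_and_card (compMap hSD)).mpr ⟨hsurj,
    show compCount ↑S = compCount ↑D by omega⟩
  exact conn_of_compMap_injective hSD hbij.1 ha hb h

theorem IsMaxNoncrossing.isNASF (hD : IsSkew (↑D : Set (ℕ × ℕ)))
    (hocc : Occupies (↑D : Set (ℕ × ℕ)) r c) (hM : IsMaxNoncrossing D M) :
    IsNASF D r c (compCount ↑D) M := by
  have hrows : ∀ i, 1 ≤ i → i ≤ r → ∃ j, (i, j) ∈ M := fun i h₁ h₂ =>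
    let ⟨_, hj⟩ := hocc.2.1 i h₁ h₂
    hM.exists_mem_row hD hj
  have hcols : ∀ j, 1 ≤ j → j ≤ c → ∃ i, (i, j) ∈ M := fun j h₁ h₂ =>
    let ⟨_, hi⟩ := hocc.2.2 j h₁ h₂
    hM.exists_mem_col hD hi
  have hcc := Nat.card_eq_of_bijective _
    ⟨compMap_injective hM.1 fun a ha b hb h => hM.conn hD ha hb h,
      compMap_surjective_of_rows hocc hM.1 hrows⟩
  have hsum := compCount_add_card_eq hocc hM.1 hrows hcols hM.2.1.rowColAcyclic
  change compCount ↑M = compCount ↑D at hcc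
  exact ⟨hM.1, by omega, hrows, hcols, hM.2.1.rowColAcyclic, hM.2.1⟩

/-- The functional `e_i ↦ α i`, `e_{r+j} ↦ β j`; coordinate `t` carries `e_{t+1}`. -/
noncomputable def potentialFunctional (r c : ℕ) (α β : ℕ → ℝ) : (Fin (r + c) → ℝ) →ₗ[ℝ] ℝ :=
  ∑ t : Fin (r + c), (if (t : ℕ) < r then α (t + 1) else β (t + 1 - r)) • LinearMap.proj t

theorem potentialFunctional_boxVec (α β : ℕ → ℝ) {d : ℕ × ℕ} (h₁ : 1 ≤ d.1) (h₂ : d.1 ≤ r)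
    (h₃ : 1 ≤ d.2) (h₄ : d.2 ≤ c) :
    potentialFunctional r c α β (boxVec r c d) = α d.1 - β d.2 := by
  simp only [potentialFunctional, boxVec, LinearMap.sum_apply,
    LinearMap.smul_apply, LinearMap.proj_apply, smul_eq_mul, mul_sub, mul_ite, mul_one, mul_zero,
    Finset.sum_sub_distrib]
  rw [Fin.sum_univ_eq_sum_range (fun t => if t = d.1 - 1 then
      (if t < r then α (t + 1) else β (t + 1 - r)) else 0),
    Fin.sum_univ_eq_sum_range (fun t => if t = r + d.2 - 1 then
      (if t < r then α (t + 1) else β (t + 1 - r)) else 0),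
    Finset.sum_ite_eq', Finset.sum_ite_eq']
  simp only [Finset.mem_range, if_pos (show d.1 - 1 < r + c by omega),
    if_pos (show r + d.2 - 1 < r + c by omega), if_pos (show d.1 - 1 < r by omega),
    if_neg (show ¬r + d.2 - 1 < r by omega), show d.1 - 1 + 1 = d.1 by omega,
    show r + d.2 - 1 + 1 - r = d.2 by omega]

theorem boxVec_add_boxVec (r c i i' j j' : ℕ) :
    boxVec r c (i, j') + boxVec r c (i', j) = boxVec r c (i, j) + boxVec r c (i', j') := by
  funext t
  simp only [boxVec, Pi.add_apply]
  ring

def boxWeight (r : ℕ) (q : ℕ × ℕ) : ℝ := ((q.1 : ℝ) - ((r : ℝ) + (q.2 : ℝ))) ^ 2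

theorem isStrictMonge_boxWeight (r : ℕ) : IsStrictMonge (boxWeight r) := by
  intro i i' j j' hi hj
  have hi' : (i : ℝ) < i' := by exact_mod_cast hi
  have hj' : (j : ℝ) < j' := by exact_mod_cast hj
  simp only [boxWeight]
  nlinarith [mul_pos (sub_pos.mpr hi') (sub_pos.mpr hj')]

theorem natFun_eq_upperEnvelope (D : Finset (ℕ × ℕ)) (r c : ℕ) :
    natFun D r c = upperEnvelope (boxVec r c) (boxWeight r) D :=
  rfl

/-- The potentials solving `W d = α d.1 - β d.2` on the forest `S` dominate `W` on all of `D`. -/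
theorem _root_.IsNASF.exists_affine_eqOn
    (hocc : Occupies (↑D : Set (ℕ × ℕ)) r c) (hk : compCount (↑D : Set (ℕ × ℕ)) = k)
    (hW : IsMonge W) (hS : IsNASF D r c k S) :
    ∃ g : (Fin (r + c) → ℝ) →ᵃ[ℝ] ℝ,
      ∀ x ∈ convexHull ℝ (boxVec r c '' ↑S), upperEnvelope (boxVec r c) W D x = g x := by
  obtain ⟨hSD, -, hrows, hcols, hacyc, hnc⟩ := id hS
  obtain ⟨α, β, hαβ⟩ := hacyc.exists_potential W
  have hdom : ∀ d ∈ D, W d ≤ α d.1 - β d.2 := by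
    intro d hd
    obtain ⟨h₁, h₂, h₃, h₄⟩ := hocc.1 d hd
    obtain ⟨j, hj⟩ := hrows d.1 h₁ h₂
    obtain ⟨i, hi⟩ := hcols d.2 h₃ h₄
    have hconn := hS.conn hocc hk hj hi
      (.head ⟨hSD hj, hd, .inl rfl⟩ (.single ⟨hd, hSD hi, .inr rfl⟩))
    rcases IsNoncrossing.stair_of_conn hnc hj hconn with h | h
    · exact (h.corner_le hW hαβ hj).1
    · exact (h.corner_le hW hαβ hi).2
  let L := (potentialFunctional r c α β).toAffineMap
  have hL : ∀ d ∈ D, L (boxVec r c d) = α d.1 - β d.2 := fun d hd =>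
    have ⟨h₁, h₂, h₃, h₄⟩ := hocc.1 d hd
    potentialFunctional_boxVec α β h₁ h₂ h₃ h₄
  refine ⟨L, fun x hx => le_antisymm ?_ ?_⟩
  · exact upperEnvelope_le (fun d hd => (hL d hd).symm ▸ hdom d hd)
      (convexHull_mono (Set.image_mono (Finset.coe_subset.mpr hSD)) hx)
  · exact le_upperEnvelope_of_eq hSD (fun d hd => (hL d (hSD hd)).symm ▸ hαβ d hd) hx

theorem exists_isNASF_of_eqOn_affine (hD : IsSkew (↑D : Set (ℕ × ℕ)))
    (hocc : Occupies (↑D : Set (ℕ × ℕ)) r c) (hk : compCount (↑D : Set (ℕ × ℕ)) = k)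
    (hW : IsStrictMonge W) {A : Set (Fin (r + c) → ℝ)}
    (hA : A ⊆ convexHull ℝ (boxVec r c '' ↑D)) (hAc : Convex ℝ A)
    (hg : ∃ g : (Fin (r + c) → ℝ) →ᵃ[ℝ] ℝ, ∀ x ∈ A, upperEnvelope (boxVec r c) W D x = g x) :
    ∃ S, IsNASF D r c k S ∧ A ⊆ convexHull ℝ (boxVec r c '' ↑S) := by
  obtain ⟨g, hg⟩ := hg
  obtain ⟨T, hTD, hAT, hexch⟩ := exists_subset_convexHull_of_upperEnvelope_eq_affine hA hAc hg
  have hT : IsNoncrossing T := by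
    rintro ⟨i, j⟩ hd₁ ⟨i', j'⟩ hd₂ ⟨h₁, h₂⟩
    have hne : (i, j) ≠ (i', j') := fun h => h₁.ne (congrArg Prod.fst h)
    have := hexch _ hd₁ _ hd₂ hne _ (hD.mem (hTD hd₁) (hTD hd₂) le_rfl h₁.le h₂.le le_rfl)
      _ (hD.mem (hTD hd₁) (hTD hd₂) h₁.le le_rfl le_rfl h₂.le) (boxVec_add_boxVec r c i i' j j')
    exact (hW i i' j j' h₁ h₂).not_ge this
  obtain ⟨M, hTM, hM⟩ := exists_isMaxNoncrossing_superset hTD hT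
  exact ⟨M, hk ▸ hM.isNASF hD hocc,
    hAT.trans (convexHull_mono (Set.image_mono (Finset.coe_subset.mpr hTM)))⟩

end SkewDiagram

theorem stmt7_general (D : Finset (ℕ × ℕ)) (r c k : ℕ)
    (hskew : IsSkew (↑D)) (hocc : Occupies (↑D) r c) (hk : compCount (↑D) = k) :
    ConcaveOn ℝ (convexHull ℝ (boxVec r c '' (↑D : Set (ℕ × ℕ)))) (natFun D r c) ∧
    (∀ S : Finset (ℕ × ℕ), IsNASF D r c k S →
      ∃ g : (Fin (r + c) → ℝ) →ᵃ[ℝ] ℝ,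
        ∀ x ∈ convexHull ℝ (boxVec r c '' (↑S : Set (ℕ × ℕ))), natFun D r c x = g x) ∧
    (∀ A : Set (Fin (r + c) → ℝ), A ⊆ convexHull ℝ (boxVec r c '' (↑D : Set (ℕ × ℕ))) →
      Convex ℝ A →
      (∃ g : (Fin (r + c) → ℝ) →ᵃ[ℝ] ℝ, ∀ x ∈ A, natFun D r c x = g x) →
      ∃ S : Finset (ℕ × ℕ), IsNASF D r c k S ∧
        A ⊆ convexHull ℝ (boxVec r c '' (↑S : Set (ℕ × ℕ)))) := by
  have hW := SkewDiagram.isStrictMonge_boxWeight r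
  rw [SkewDiagram.natFun_eq_upperEnvelope]
  exact ⟨concaveOn_upperEnvelope, fun S hS => hS.exists_affine_eqOn hocc hk hW.isMonge,
    fun A hA hAc hg => SkewDiagram.exists_isNASF_of_eqOn_affine hskew hocc hk hW hA hAc hg⟩

theorem stmt7 (D : Finset (ℕ × ℕ)) (r c k : ℕ) (hne : D.Nonempty)
    (hskew : IsSkew (↑D)) (hocc : Occupies (↑D) r c) (hk : compCount (↑D) = k) :
    ConcaveOn ℝ (convexHull ℝ (boxVec r c '' (↑D : Set (ℕ × ℕ)))) (natFun D r c) ∧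
    (∀ S : Finset (ℕ × ℕ), IsNASF D r c k S →
      ∃ g : (Fin (r + c) → ℝ) →ᵃ[ℝ] ℝ,
        ∀ x ∈ convexHull ℝ (boxVec r c '' (↑S : Set (ℕ × ℕ))), natFun D r c x = g x) ∧
    (∀ A : Set (Fin (r + c) → ℝ), A ⊆ convexHull ℝ (boxVec r c '' (↑D : Set (ℕ × ℕ))) →
      Convex ℝ A →
      (∃ g : (Fin (r + c) → ℝ) →ᵃ[ℝ] ℝ, ∀ x ∈ A, natFun D r c x = g x) →
      ∃ S : Finset (ℕ × ℕ), IsNASF D r c k S ∧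
        A ⊆ convexHull ℝ (boxVec r c '' (↑S : Set (ℕ × ℕ)))) :=
  stmt7_general D r c k hskew hocc hk
end

section
/- If π is a permutation of {1,…,n} of the form π = 1π' with π' dominant, then the affine dimension of the polytope Φ(P(Y_π)) = ConvHull{e_i − e_{n+j} : (i,j) ∈ L(π)} ⊆ ℝ^{2n} equals |L'(π)| − 1. (This is the polytopal form of the corollary that Y_{1π'} is a toric variety.) -/
open scoped BigOperators

/-- The vertex `e_i - e_{n+j} ∈ ℝ^{2n}` associated to the (1-indexed) box `(i,j)`. -/
def vtx (n : ℕ) (p : ℕ × ℕ) : Fin (2 * n) → ℝ :=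
  fun t => (if (t : ℕ) = p.1 - 1 then 1 else 0) - (if (t : ℕ) = n + p.2 - 1 then 1 else 0)

namespace Stmt9Aux

/-- The standard basis vector `e_m` (as a function; 0 if `m` is out of range). -/
def E (n m : ℕ) : Fin (2 * n) → ℝ := fun t => if (t : ℕ) = m then 1 else 0

lemma vtx_eq (n : ℕ) (p : ℕ × ℕ) : vtx n p = E n (p.1 - 1) - E n (n + p.2 - 1) := rfl

/-- The spanning family `e_{i+1} - e_0` (for `i < ℓ`) and `e_{n+j+1} - e_n` (for `j < k`). -/
def fam (n ℓ k : ℕ) : Fin ℓ ⊕ Fin k → (Fin (2 * n) → ℝ)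
  | .inl i => E n ((i : ℕ) + 1) - E n 0
  | .inr j => E n (n + (j : ℕ) + 1) - E n n

variable {n ℓ : ℕ} {π : Equiv.Perm ℕ} {lam : ℕ → ℕ}

lemma perm_mapsTo (hπ : IsPermOn n π) {x : ℕ} (h1 : 1 ≤ x) (h2 : x ≤ n) :
    1 ≤ π x ∧ π x ≤ n := by
  by_contra h
  have h' := hπ (π x) h
  have hx := π.injective h'
  rw [hx] at h
  exact h ⟨h1, h2⟩

lemma inv_bounds (hπ : IsPermOn n π) {a b : ℕ} (hab : a < b) (hba : π b < π a) :
    1 ≤ a ∧ b ≤ n := by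
  have ha : 1 ≤ a := by
    by_contra h
    have h0 : a = 0 := by omega
    have h0' := hπ 0 (by omega)
    rw [h0, h0'] at hba
    omega
  refine ⟨ha, ?_⟩
  by_contra h
  have hb' := hπ b (by omega)
  rcases le_or_gt a n with h1 | h1
  · have := (perm_mapsTo hπ ha h1).2
    omega
  · have := hπ a (by omega)
    omega

lemma RD_mem (hdom : DominantOne π ℓ lam) (a b : ℕ) :
    (a, b) ∈ RD π ↔ 2 ≤ a ∧ a ≤ ℓ + 1 ∧ 2 ≤ b ∧ b ≤ lam (a - 1) + 1 := by
  obtain ⟨-, hl, hmono, hpos, hRD⟩ := hdom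
  rw [hRD]
  constructor
  · rintro ⟨i, j, hi1, hil, hj1, hjl, heq⟩
    rw [Prod.mk.injEq] at heq
    obtain ⟨rfl, rfl⟩ := heq
    simp only [Nat.add_sub_cancel]
    omega
  · rintro ⟨h1, h2, h3, h4⟩
    exact ⟨a - 1, b - 1, by omega, by omega, by omega, by omega, by
      rw [Prod.mk.injEq]; omega⟩

lemma NW_mem (hdom : DominantOne π ℓ lam) (a b : ℕ) :
    (a, b) ∈ NWset π ↔
      ((a = 1 ∧ 1 ≤ b ∧ b ≤ lam 1 + 1) ∨
        (2 ≤ a ∧ a ≤ ℓ + 1 ∧ 1 ≤ b ∧ b ≤ lam (a - 1) + 1)) := by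
  have hl := hdom.2.1
  have hmono := hdom.2.2.1
  have hpos := hdom.2.2.2.1
  constructor
  · rintro ⟨ha, hb, ⟨q1, q2⟩, hq, h1, h2⟩
    rw [RD_mem hdom] at hq
    obtain ⟨hq1, hq2, hq3, hq4⟩ := hq
    simp only at h1 h2 ha hb
    rcases Nat.lt_or_ge a 2 with hc | hc
    · left
      have hm : lam (q1 - 1) ≤ lam 1 := hmono 1 (q1 - 1) le_rfl (by omega) (by omega)
      omega
    · right
      have hm : lam (q1 - 1) ≤ lam (a - 1) :=
        hmono (a - 1) (q1 - 1) (by omega) (by omega) (by omega)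
      omega
  · rintro (⟨rfl, hb1, hb2⟩ | ⟨ha1, ha2, hb1, hb2⟩)
    · refine ⟨le_rfl, hb1, (2, max b 2), ?_, by simp, by simp⟩
      rw [RD_mem hdom]
      have := hpos 1 le_rfl hl
      rw [show (2:ℕ) - 1 = 1 from rfl]
      omega
    · refine ⟨by omega, hb1, (a, max b 2), ?_, le_rfl, le_max_left _ _⟩
      rw [RD_mem hdom]
      have := hpos (a - 1) (by omega) (by omega)
      omega

lemma dom_empty (hdom : DominantOne π ℓ lam) : domPiece π = ∅ := by
  ext q
  simp only [domPiece, Set.mem_setOf_eq, Set.mem_empty_iff_false, iff_false, not_and]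
  intro h
  rw [RD_mem hdom] at h
  omega

lemma Lset_mem (hdom : DominantOne π ℓ lam) (a b : ℕ) :
    (a, b) ∈ Lset π ↔
      ((a = 1 ∧ 1 ≤ b ∧ b ≤ lam 1 + 1) ∨
        (2 ≤ a ∧ a ≤ ℓ + 1 ∧ 1 ≤ b ∧ b ≤ lam (a - 1) + 1)) := by
  rw [Lset, dom_empty hdom, Set.diff_empty, NW_mem hdom]

lemma L'_mem (hdom : DominantOne π ℓ lam) (a b : ℕ) :
    (a, b) ∈ L'set π ↔
      ((a = 1 ∧ 1 ≤ b ∧ b ≤ lam 1 + 1) ∨ (2 ≤ a ∧ a ≤ ℓ + 1 ∧ b = 1)) := by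
  rw [L'set, Set.mem_diff, Lset_mem hdom, RD_mem hdom]
  omega

lemma L'_card (hdom : DominantOne π ℓ lam) :
    (L'set π).ncard = lam 1 + 1 + ℓ := by
  classical
  have hset : L'set π =
      ↑(((Finset.Icc 1 (lam 1 + 1)).image fun j => ((1 : ℕ), j)) ∪
        ((Finset.Icc 2 (ℓ + 1)).image fun i => (i, (1 : ℕ)))) := by
    ext ⟨a, b⟩
    rw [L'_mem hdom]
    simp only [Finset.coe_union, Finset.coe_image, Finset.coe_Icc, Set.mem_union,
      Set.mem_image, Set.mem_Icc, Prod.mk.injEq]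
    constructor
    · rintro (⟨rfl, h1, h2⟩ | ⟨h1, h2, rfl⟩)
      · exact Or.inl ⟨b, ⟨h1, h2⟩, rfl, rfl⟩
      · exact Or.inr ⟨a, ⟨h1, h2⟩, rfl, rfl⟩
    · rintro (⟨j, hj, rfl, rfl⟩ | ⟨i, hi, rfl, rfl⟩)
      · exact Or.inl ⟨rfl, hj.1, hj.2⟩
      · exact Or.inr ⟨hi.1, hi.2, rfl⟩
  rw [hset, Set.ncard_coe_finset]
  rw [Finset.card_union_of_disjoint]
  · rw [Finset.card_image_of_injective _ (fun x y h => by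
        simpa using (Prod.mk.injEq _ _ _ _ ▸ h).2),
      Finset.card_image_of_injective _ (fun x y h => by
        simpa using (Prod.mk.injEq _ _ _ _ ▸ h).1),
      Nat.card_Icc, Nat.card_Icc]
    omega
  · rw [Finset.disjoint_left]
    rintro ⟨a, b⟩ h1 h2
    simp only [Finset.mem_image, Finset.mem_Icc, Prod.mk.injEq] at h1 h2
    obtain ⟨j, hj, hj1, hj2⟩ := h1
    obtain ⟨i, hi, hi1, hi2⟩ := h2
    omega

end Stmt9Aux

open Stmt9Aux in
theorem stmt9 (n : ℕ) (hn : 1 ≤ n) (π : Equiv.Perm ℕ) (hπ : IsPermOn n π)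
    (ℓ : ℕ) (lam : ℕ → ℕ) (hdom : DominantOne π ℓ lam) :
    Module.finrank ℝ ↥(vectorSpan ℝ (convexHull ℝ (vtx n '' Lset π))) =
      (L'set π).ncard - 1 := by
  classical
  have hl := hdom.2.1
  have hmono := hdom.2.2.1
  have hpos := hdom.2.2.2.1
  set k := lam 1 with hk
  have hk1 : 1 ≤ k := hpos 1 le_rfl hl
  -- bounds: ℓ + 1 ≤ n and k + 2 ≤ n
  have hln : ℓ + 1 ≤ n := by
    have hmem : ((ℓ + 1 : ℕ), (2 : ℕ)) ∈ RD π := by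
      rw [RD_mem hdom]
      have := hpos ℓ hl le_rfl
      simp only [Nat.add_sub_cancel]
      omega
    obtain ⟨a, b, hab, hba, heq⟩ := hmem
    rw [Prod.mk.injEq] at heq
    obtain ⟨h1, h2⟩ := heq
    obtain ⟨ha1, hbn⟩ := inv_bounds hπ hab hba
    have := (perm_mapsTo hπ (by omega : 1 ≤ b) hbn).2
    omega
  have hkn : k + 2 ≤ n := by
    have hmem : ((2 : ℕ), k + 1) ∈ RD π := by
      rw [RD_mem hdom]
      rw [show (2:ℕ) - 1 = 1 from rfl]
      omega
    obtain ⟨a, b, hab, hba, heq⟩ := hmem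
    rw [Prod.mk.injEq] at heq
    obtain ⟨h1, h2⟩ := heq
    obtain ⟨ha1, hbn⟩ := inv_bounds hπ hab hba
    omega
  -- linear independence of the family
  have hind : LinearIndependent ℝ (fam n ℓ k) := by
    rw [Fintype.linearIndependent_iff]
    intro g hg m₀
    match m₀ with
    | Sum.inl i₀ =>
      have h2n : (i₀ : ℕ) + 1 < 2 * n := by have := i₀.2; omega
      have hval := congrFun hg ⟨(i₀ : ℕ) + 1, h2n⟩
      rw [Finset.sum_apply] at hval
      have hkey : ∀ m, (g m • fam n ℓ k m) (⟨(i₀ : ℕ) + 1, h2n⟩ : Fin (2 * n)) =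
          if m = Sum.inl i₀ then g m else 0 := by
        rintro (i | j)
        · simp only [Pi.smul_apply, fam, Pi.sub_apply, E, smul_eq_mul, Sum.inl.injEq]
          by_cases hii : i = i₀
          · subst hii
            rw [if_pos rfl, if_neg (by omega), if_pos rfl]
            ring
          · rw [if_neg (fun hc => hii (Fin.ext (by omega))), if_neg (by omega), if_neg hii]
            ring
        · have hj2 := j.2
          have hi2 := i₀.2
          simp only [Pi.smul_apply, fam, Pi.sub_apply, E, smul_eq_mul]
          rw [if_neg (by omega), if_neg (by omega), if_neg (by simp)]
          ring
      rw [Finset.sum_congr rfl (fun m _ => hkey m), Finset.sum_ite_eq' Finset.univ] at hval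
      simpa using hval
    | Sum.inr j₀ =>
      have h2n : n + (j₀ : ℕ) + 1 < 2 * n := by have := j₀.2; omega
      have hval := congrFun hg ⟨n + (j₀ : ℕ) + 1, h2n⟩
      rw [Finset.sum_apply] at hval
      have hkey : ∀ m, (g m • fam n ℓ k m) (⟨n + (j₀ : ℕ) + 1, h2n⟩ : Fin (2 * n)) =
          if m = Sum.inr j₀ then g m else 0 := by
        rintro (i | j)
        · have hi2 := i.2
          simp only [Pi.smul_apply, fam, Pi.sub_apply, E, smul_eq_mul]
          rw [if_neg (by omega), if_neg (by omega), if_neg (by simp)]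
          ring
        · simp only [Pi.smul_apply, fam, Pi.sub_apply, E, smul_eq_mul, Sum.inr.injEq]
          by_cases hjj : j = j₀
          · subst hjj
            rw [if_pos rfl, if_neg (by omega), if_pos rfl]
            ring
          · rw [if_neg (fun hc => hjj (Fin.ext (by omega))), if_neg (by omega), if_neg hjj]
            ring
      rw [Finset.sum_congr rfl (fun m _ => hkey m), Finset.sum_ite_eq' Finset.univ] at hval
      simpa using hval
  -- membership facts
  have h11 : ((1 : ℕ), (1 : ℕ)) ∈ Lset π := by
    rw [Lset_mem hdom]
    left
    omega
  -- the span equality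
  have hspan : vectorSpan ℝ (vtx n '' Lset π) = Submodule.span ℝ (Set.range (fam n ℓ k)) := by
    apply le_antisymm
    · rw [vectorSpan_def]
      rw [Submodule.span_le]
      have base : ∀ p ∈ Lset π,
          vtx n p - vtx n (1, 1) ∈ Submodule.span ℝ (Set.range (fam n ℓ k)) := by
        rintro ⟨a, b⟩ hp
        rw [Lset_mem hdom] at hp
        have hab : 1 ≤ a ∧ a ≤ ℓ + 1 ∧ 1 ≤ b ∧ b ≤ k + 1 := by
          rcases hp with ⟨rfl, h1, h2⟩ | ⟨h1, h2, h3, h4⟩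
          · omega
          · have := hmono 1 (a - 1) le_rfl (by omega) (by omega)
            omega
        have hA : E n (a - 1) - E n 0 ∈ Submodule.span ℝ (Set.range (fam n ℓ k)) := by
          rcases Nat.lt_or_ge a 2 with hc | hc
          · have ha1 : a = 1 := by omega
            rw [ha1]
            simp only [Nat.sub_self]
            rw [sub_self]
            exact Submodule.zero_mem _
          · have hlt : a - 2 < ℓ := by omega
            have heq : fam n ℓ k (Sum.inl ⟨a - 2, hlt⟩) = E n (a - 1) - E n 0 := by
              show E n ((a - 2) + 1) - E n 0 = E n (a - 1) - E n 0
              rw [show a - 2 + 1 = a - 1 by omega]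
            rw [← heq]
            exact Submodule.subset_span ⟨Sum.inl ⟨a - 2, hlt⟩, rfl⟩
        have hB : E n (n + b - 1) - E n n ∈ Submodule.span ℝ (Set.range (fam n ℓ k)) := by
          rcases Nat.lt_or_ge b 2 with hc | hc
          · have hb1 : b = 1 := by omega
            rw [hb1]
            have : n + 1 - 1 = n := by omega
            rw [this, sub_self]
            exact Submodule.zero_mem _
          · have hlt : b - 2 < k := by omega
            have heq : fam n ℓ k (Sum.inr ⟨b - 2, hlt⟩) = E n (n + b - 1) - E n n := by
              show E n (n + (b - 2) + 1) - E n n = E n (n + b - 1) - E n n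
              rw [show n + (b - 2) + 1 = n + b - 1 by omega]
            rw [← heq]
            exact Submodule.subset_span ⟨Sum.inr ⟨b - 2, hlt⟩, rfl⟩
        have hdecomp : vtx n (a, b) - vtx n (1, 1) =
            (E n (a - 1) - E n 0) - (E n (n + b - 1) - E n n) := by
          rw [vtx_eq, vtx_eq]
          simp only
          have h1 : (1 : ℕ) - 1 = 0 := rfl
          have h2 : n + 1 - 1 = n := by omega
          rw [h1, h2]
          abel
        rw [hdecomp]
        exact sub_mem hA hB
      rintro x hx
      rw [Set.mem_vsub] at hx
      obtain ⟨p', hp', q', hq', rfl⟩ := hx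
      obtain ⟨p, hp, rfl⟩ := hp'
      obtain ⟨q, hq, rfl⟩ := hq'
      rw [vsub_eq_sub]
      have hrw : vtx n p - vtx n q =
          (vtx n p - vtx n (1, 1)) - (vtx n q - vtx n (1, 1)) := by abel
      rw [hrw]
      exact sub_mem (base p hp) (base q hq)
    · rw [Submodule.span_le]
      rintro x ⟨m, rfl⟩
      match m with
      | Sum.inl i =>
        have hi2 := i.2
        have hmem : (((i : ℕ) + 2, (1 : ℕ)) : ℕ × ℕ) ∈ Lset π := by
          rw [Lset_mem hdom]
          right
          refine ⟨by omega, by omega, le_rfl, by omega⟩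
        have hv := vsub_mem_vectorSpan ℝ (Set.mem_image_of_mem (vtx n) hmem)
          (Set.mem_image_of_mem (vtx n) h11)
        have heq : fam n ℓ k (Sum.inl i) = vtx n ((i : ℕ) + 2, 1) -ᵥ vtx n (1, 1) := by
          rw [vsub_eq_sub, vtx_eq, vtx_eq]
          simp only
          have h1 : (i : ℕ) + 2 - 1 = (i : ℕ) + 1 := by omega
          have h2 : n + 1 - 1 = n := by omega
          have h3 : (1 : ℕ) - 1 = 0 := rfl
          rw [h1, h2, h3]
          show E n ((i : ℕ) + 1) - E n 0 = _
          abel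
        rw [heq]
        exact hv
      | Sum.inr j =>
        have hj2 := j.2
        have hmem : (((1 : ℕ), (j : ℕ) + 2) : ℕ × ℕ) ∈ Lset π := by
          rw [Lset_mem hdom]
          left
          exact ⟨rfl, by omega, by omega⟩
        have hv := vsub_mem_vectorSpan ℝ (Set.mem_image_of_mem (vtx n) h11)
          (Set.mem_image_of_mem (vtx n) hmem)
        have heq : fam n ℓ k (Sum.inr j) = vtx n (1, 1) -ᵥ vtx n (1, (j : ℕ) + 2) := by
          rw [vsub_eq_sub, vtx_eq, vtx_eq]
          simp only
          have h1 : n + ((j : ℕ) + 2) - 1 = n + (j : ℕ) + 1 := by omega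
          have h2 : n + 1 - 1 = n := by omega
          have h3 : (1 : ℕ) - 1 = 0 := rfl
          rw [h1, h2, h3]
          show E n (n + (j : ℕ) + 1) - E n n = _
          abel
        rw [heq]
        exact hv
  rw [← direction_affineSpan, affineSpan_convexHull, direction_affineSpan, hspan,
    finrank_span_eq_card hind, L'_card hdom]
  simp only [Fintype.card_sum, Fintype.card_fin]
  omega
end

section
/- Let π be a permutation of {1,…,n} of the form π = 1π' with π' dominant (so that Ess(π) ⊆ L(π)). Then the convex hull ConvHull{e_a − e_{n+b} : (a,b) ∈ Ess(π)} is an exposed face of the polytope Φ(P(Y_π)): there exists a linear functional ℓ : ℝ^{2n} → ℝ such that the set of points of Φ(P(Y_π)) at which ℓ attains its maximum over Φ(P(Y_π)) is exactly ConvHull{e_a − e_{n+b} : (a,b) ∈ Ess(π)}. -/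
open scoped BigOperators

/-!
Since `D(π)` starts at `(2,2)`, `dom(π)` is empty and `L(π) = NW(π)` is a Young diagram whose
row `i` has length `μ_i` (row `1` repeating row `2`); `Ess(π)` consists of the row ends `(i, μ_i)`
of the rows `i ≥ 2` after which the row length drops. The functional with weight
`-μ_i - [i is not such a row]` on `e_i` and `-j` on `e_{n+j}` takes the value
`j - μ_i - [i is not such a row] ≤ 0` at `e_i - e_{n+j}`, with equality exactly on `Ess(π)`.
The maximizers of a linear functional on a convex hull are the convex hull of its maximizers
on the generating set.
-/

section SupportingHyperplane

variable {𝕜 E : Type*} [Field 𝕜] [LinearOrder 𝕜] [IsStrictOrderedRing 𝕜]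
  [AddCommGroup E] [Module 𝕜 E] {S : Set E} {f : E →ₗ[𝕜] 𝕜} {M : 𝕜}

lemma apply_le_of_mem_convexHull (hS : ∀ s ∈ S, f s ≤ M) {x : E} (hx : x ∈ convexHull 𝕜 S) :
    f x ≤ M :=
  convexHull_min hS ((convex_Iic M).linear_preimage f) hx

theorem convexHull_inter_level_eq (hS : ∀ s ∈ S, f s ≤ M) :
    convexHull 𝕜 S ∩ {x | f x = M} = convexHull 𝕜 {s ∈ S | f s = M} := by
  have hle : ∀ x ∈ convexHull 𝕜 S, f x ≤ M := fun _ => apply_le_of_mem_convexHull hS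
  refine subset_antisymm ?_ (Set.subset_inter (convexHull_mono fun s hs => hs.1) ?_)
  · -- points of the hull strictly below the level, together with the hull of the level set,
    -- form a convex set containing `S`
    set C := convexHull 𝕜 {s ∈ S | f s = M} ∪ {x ∈ convexHull 𝕜 S | f x < M}
    have hsub : C ⊆ convexHull 𝕜 S :=
      Set.union_subset (convexHull_mono fun s hs => hs.1) fun x hx => hx.1
    have hC : Convex 𝕜 C := by
      refine convex_iff_forall_pos.2 fun x hx y hy a b ha hb hab => ?_
      by_cases hxy : x ∈ convexHull 𝕜 {s ∈ S | f s = M} ∧ y ∈ convexHull 𝕜 {s ∈ S | f s = M}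
      · exact Or.inl (convex_convexHull 𝕜 _ hxy.1 hxy.2 ha.le hb.le hab)
      refine Or.inr ⟨convex_convexHull 𝕜 S (hsub hx) (hsub hy) ha.le hb.le hab, ?_⟩
      have hfx := hle x (hsub hx)
      have hfy := hle y (hsub hy)
      have hlt : f x < M ∨ f y < M := by
        rcases hx with hx | hx <;> rcases hy with hy | hy
        exacts [(hxy ⟨hx, hy⟩).elim, Or.inr hy.2, Or.inl hx.2, Or.inl hx.2]
      have hM : a * M + b * M = M := by rw [← add_mul, hab, one_mul]
      simp only [map_add, map_smul, smul_eq_mul]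
      rcases hlt with h | h
      · linarith [mul_lt_mul_of_pos_left h ha, mul_le_mul_of_nonneg_left hfy hb.le]
      · linarith [mul_le_mul_of_nonneg_left hfx ha.le, mul_lt_mul_of_pos_left h hb]
    have hSC : convexHull 𝕜 S ⊆ C := convexHull_min (fun s hs =>
      (hS s hs).eq_or_lt.elim (fun h => Or.inl (subset_convexHull 𝕜 _ ⟨hs, h⟩))
        fun h => Or.inr ⟨subset_convexHull 𝕜 _ hs, h⟩) hC
    rintro x ⟨hx, hfx⟩
    exact (hSC hx).resolve_right fun h => h.2.ne hfx
  · exact fun x hx => convexHull_min (fun s hs => hs.2)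
      (show Convex 𝕜 {x | f x = M} from (convex_singleton M).linear_preimage f) hx

theorem setOf_isMax_convexHull_eq (hS : ∀ s ∈ S, f s ≤ M) (hM : ∃ s ∈ S, f s = M) :
    {x ∈ convexHull 𝕜 S | ∀ y ∈ convexHull 𝕜 S, f y ≤ f x} =
      convexHull 𝕜 {s ∈ S | f s = M} := by
  rw [← convexHull_inter_level_eq hS]
  have hle : ∀ x ∈ convexHull 𝕜 S, f x ≤ M := fun _ => apply_le_of_mem_convexHull hS
  obtain ⟨s, hs, hfs⟩ := hM
  ext x
  refine ⟨fun ⟨hx, hmax⟩ => ⟨hx, ?_⟩, fun ⟨hx, hfx⟩ => ⟨hx, fun y hy => hfx ▸ hle y hy⟩⟩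
  exact le_antisymm (hle x hx) (hfs ▸ hmax s (subset_convexHull 𝕜 S hs))

end SupportingHyperplane

lemma vtx_eq_sub_single {n i j : ℕ} (hi : i - 1 < 2 * n) (hj : n + j - 1 < 2 * n) :
    vtx n (i, j) = Pi.single ⟨i - 1, hi⟩ 1 - Pi.single ⟨n + j - 1, hj⟩ 1 := by
  ext t
  simp [vtx, Pi.single_apply, Fin.ext_iff]

def rowColWeights (n : ℕ) (a b : ℕ → ℝ) (t : Fin (2 * n)) : ℝ :=
  if (t : ℕ) < n then a (t + 1) else b (t + 1 - n)

lemma linearCombination_rowColWeights_vtx {n i j : ℕ} (a b : ℕ → ℝ) (hi : 1 ≤ i) (hin : i ≤ n)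
    (hj : 1 ≤ j) (hjn : j ≤ n) :
    Fintype.linearCombination ℝ (rowColWeights n a b) (vtx n (i, j)) = a i - b j := by
  rw [vtx_eq_sub_single (by omega) (by omega), map_sub,
    Fintype.linearCombination_apply_single, Fintype.linearCombination_apply_single]
  simp only [rowColWeights, one_smul]
  rw [if_pos (by omega), if_neg (by omega), Nat.sub_add_cancel hi,
    show n + j - 1 + 1 - n = j by omega]

lemma IsPermOn.apply_le {n : ℕ} {π : Equiv.Perm ℕ} (hπ : IsPermOn n π) {i : ℕ} (hi : i ≤ n) :
    π i ≤ n := by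
  by_contra h
  have hfix : π (π i) = π i := hπ _ (by omega)
  have := π.injective hfix
  omega

lemma IsPermOn.le_of_mem_NWset {n : ℕ} {π : Equiv.Perm ℕ} (hπ : IsPermOn n π) {p : ℕ × ℕ}
    (hp : p ∈ NWset π) : p.1 ≤ n ∧ p.2 ≤ n := by
  obtain ⟨-, -, _, ⟨i, j, hij, hlt, rfl⟩, h1, h2⟩ := hp
  have hin : i ≤ n := by
    by_contra h
    have := hπ i (by omega)
    have := hπ j (by omega)
    omega
  have := hπ.apply_le hin
  exact ⟨by omega, by omega⟩

lemma domPiece_eq_empty {π : Equiv.Perm ℕ} (h : (1, 1) ∉ RD π) : domPiece π = ∅ :=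
  Set.eq_empty_of_forall_notMem fun _ hq => h hq.1

/-- Length of row `i` of `L(π)`: row `1` is as long as row `2`, the first row of `D(π)`. -/
def rowLen (lam : ℕ → ℕ) (i : ℕ) : ℕ := lam (max (i - 1) 1) + 1

/-- Row `i` of `D(π)` has length `lam (i - 1)`. -/
def IsCornerRow (ℓ : ℕ) (lam : ℕ → ℕ) (i : ℕ) : Prop :=
  2 ≤ i ∧ i ≤ ℓ + 1 ∧ (i = ℓ + 1 ∨ lam i < lam (i - 1))

namespace DominantOne

variable {π : Equiv.Perm ℕ} {ℓ : ℕ} {lam : ℕ → ℕ}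

lemma mem_RD_iff (h : DominantOne π ℓ lam) {x y : ℕ} :
    (x, y) ∈ RD π ↔ 2 ≤ x ∧ x ≤ ℓ + 1 ∧ 2 ≤ y ∧ y ≤ lam (x - 1) + 1 := by
  rw [h.2.2.2.2]
  constructor
  · rintro ⟨i, j, hi, hiℓ, hj, hjl, hxy⟩
    obtain ⟨rfl, rfl⟩ := Prod.mk.inj hxy
    simp only [Nat.add_sub_cancel]
    omega
  · rintro ⟨hx, hxℓ, hy, hyl⟩
    exact ⟨x - 1, y - 1, by omega, by omega, by omega, by omega, by
      rw [Nat.sub_add_cancel (by omega), Nat.sub_add_cancel (by omega)]⟩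

lemma Lset_eq (h : DominantOne π ℓ lam) :
    Lset π = {p | 1 ≤ p.1 ∧ p.1 ≤ ℓ + 1 ∧ 1 ≤ p.2 ∧ p.2 ≤ rowLen lam p.1} := by
  have hℓ := h.2.1
  have hmono := h.2.2.1
  have hpos := h.2.2.2.1
  have hdom_empty : domPiece π = ∅ := domPiece_eq_empty fun h11 => by
    have := h.mem_RD_iff.1 h11
    omega
  rw [Lset, hdom_empty, Set.sdiff_empty]
  ext ⟨x, y⟩
  simp only [NWset, Set.mem_ofPred_eq, rowLen]
  constructor
  · rintro ⟨hx, hy, ⟨a, b⟩, hab, hxa, hyb⟩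
    rw [h.mem_RD_iff] at hab
    have := hmono (max (x - 1) 1) (a - 1) (le_max_right _ _) (by omega) (by omega)
    omega
  · rintro ⟨hx, hxℓ, hy, hyl⟩
    have := hpos (max (x - 1) 1) (le_max_right _ _) (by omega)
    refine ⟨hx, hy, (max (x - 1) 1 + 1, rowLen lam x), h.mem_RD_iff.2 ?_, by omega, hyl⟩
    simp only [rowLen, Nat.add_sub_cancel]
    omega

lemma EssSet_eq (h : DominantOne π ℓ lam) :
    EssSet π = {p | IsCornerRow ℓ lam p.1 ∧ p.2 = rowLen lam p.1} := by
  ext ⟨x, y⟩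
  simp only [EssSet, Set.mem_ofPred_eq, h.mem_RD_iff, IsCornerRow, rowLen, Nat.add_sub_cancel]
  constructor
  · rintro ⟨⟨hx, hxℓ, hy, hyl⟩, hdown, hright⟩
    rw [max_eq_left (by omega)]
    omega
  · rintro ⟨⟨hx, hxℓ, hcorner⟩, rfl⟩
    have hpos := h.2.2.2.1 (x - 1) (by omega) (by omega)
    rw [max_eq_left (by omega)]
    omega

lemma mem_Lset_iff (h : DominantOne π ℓ lam) {i j : ℕ} :
    (i, j) ∈ Lset π ↔ 1 ≤ i ∧ i ≤ ℓ + 1 ∧ 1 ≤ j ∧ j ≤ rowLen lam i := by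
  rw [h.Lset_eq]
  rfl

lemma EssSet_nonempty (h : DominantOne π ℓ lam) : (EssSet π).Nonempty :=
  ⟨(ℓ + 1, rowLen lam (ℓ + 1)), by
    rw [h.EssSet_eq]
    exact ⟨⟨by linarith [h.2.1], le_rfl, Or.inl rfl⟩, rfl⟩⟩

end DominantOne

open Classical in
noncomputable def cornerWeight (ℓ : ℕ) (lam : ℕ → ℕ) (i : ℕ) : ℝ :=
  -(rowLen lam i : ℝ) - if IsCornerRow ℓ lam i then 0 else 1

section CornerWeight

variable {ℓ : ℕ} {lam : ℕ → ℕ}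

lemma cornerWeight_add_le {i j : ℕ} (hj : j ≤ rowLen lam i) : cornerWeight ℓ lam i + j ≤ 0 := by
  have : (j : ℝ) ≤ rowLen lam i := by exact_mod_cast hj
  unfold cornerWeight
  split_ifs <;> linarith

lemma cornerWeight_add_eq_zero_iff {i j : ℕ} (hj : j ≤ rowLen lam i) :
    cornerWeight ℓ lam i + j = 0 ↔ IsCornerRow ℓ lam i ∧ j = rowLen lam i := by
  have : (j : ℝ) ≤ rowLen lam i := by exact_mod_cast hj
  unfold cornerWeight
  split_ifs with hc
  · simp only [hc, true_and, sub_zero]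
    constructor
    · intro h; exact_mod_cast (by linarith : (j : ℝ) = rowLen lam i)
    · rintro rfl; ring
  · simp only [hc, false_and, iff_false]
    linarith

end CornerWeight

noncomputable def exposingFunctional (n ℓ : ℕ) (lam : ℕ → ℕ) : (Fin (2 * n) → ℝ) →ₗ[ℝ] ℝ :=
  Fintype.linearCombination ℝ (rowColWeights n (cornerWeight ℓ lam) fun j => -(j : ℝ))

section ExposingFunctional

variable {n ℓ : ℕ} {π : Equiv.Perm ℕ} {lam : ℕ → ℕ}

lemma exposingFunctional_vtx (hπ : IsPermOn n π) (hdom : DominantOne π ℓ lam) {p : ℕ × ℕ}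
    (hp : p ∈ Lset π) : exposingFunctional n ℓ lam (vtx n p) = cornerWeight ℓ lam p.1 + p.2 := by
  have hn := hπ.le_of_mem_NWset hp.1
  rw [hdom.Lset_eq] at hp
  rw [exposingFunctional, linearCombination_rowColWeights_vtx _ _ hp.1 hn.1 hp.2.2.1 hn.2,
    sub_neg_eq_add]

lemma exposingFunctional_vtx_nonpos (hπ : IsPermOn n π) (hdom : DominantOne π ℓ lam) {p : ℕ × ℕ}
    (hp : p ∈ Lset π) : exposingFunctional n ℓ lam (vtx n p) ≤ 0 := by
  rw [exposingFunctional_vtx hπ hdom hp]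
  exact cornerWeight_add_le (hdom.mem_Lset_iff.1 hp).2.2.2

lemma sep_Lset_exposingFunctional_eq_EssSet (hπ : IsPermOn n π) (hdom : DominantOne π ℓ lam) :
    {p ∈ Lset π | exposingFunctional n ℓ lam (vtx n p) = 0} = EssSet π := by
  rw [hdom.EssSet_eq]
  ext ⟨i, j⟩
  constructor
  · rintro ⟨hp, h0⟩
    rwa [exposingFunctional_vtx hπ hdom hp,
      cornerWeight_add_eq_zero_iff (hdom.mem_Lset_iff.1 hp).2.2.2] at h0
  · rintro ⟨hc, hj : j = rowLen lam i⟩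
    subst hj
    have hp : (i, rowLen lam i) ∈ Lset π :=
      hdom.mem_Lset_iff.2 ⟨by linarith [hc.1], hc.2.1, by simp [rowLen], le_rfl⟩
    rw [Set.mem_sep_iff, exposingFunctional_vtx hπ hdom hp]
    exact ⟨hp, (cornerWeight_add_eq_zero_iff le_rfl).2 ⟨hc, rfl⟩⟩

end ExposingFunctional

theorem stmt11_general (n : ℕ) (π : Equiv.Perm ℕ) (hπ : IsPermOn n π)
    (ℓ : ℕ) (lam : ℕ → ℕ) (hdom : DominantOne π ℓ lam) :
    ∃ f : (Fin (2 * n) → ℝ) →ₗ[ℝ] ℝ,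
      {x ∈ convexHull ℝ (vtx n '' Lset π) |
          ∀ y ∈ convexHull ℝ (vtx n '' Lset π), f y ≤ f x} =
        convexHull ℝ (vtx n '' EssSet π) := by
  have hEss := sep_Lset_exposingFunctional_eq_EssSet hπ hdom
  obtain ⟨p, hp, hp0⟩ := hEss ▸ hdom.EssSet_nonempty
  refine ⟨exposingFunctional n ℓ lam, ?_⟩
  rw [setOf_isMax_convexHull_eq (M := 0), ← hEss]
  · exact congrArg _ (Set.image_inter_preimage _ _ _).symm
  · rintro _ ⟨q, hq, rfl⟩
    exact exposingFunctional_vtx_nonpos hπ hdom hq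
  · exact ⟨vtx n p, ⟨p, hp, rfl⟩, hp0⟩

theorem stmt11 (n : ℕ) (hn : 1 ≤ n) (π : Equiv.Perm ℕ) (hπ : IsPermOn n π)
    (ℓ : ℕ) (lam : ℕ → ℕ) (hdom : DominantOne π ℓ lam) :
    ∃ f : (Fin (2 * n) → ℝ) →ₗ[ℝ] ℝ,
      {x ∈ convexHull ℝ (vtx n '' Lset π) |
          ∀ y ∈ convexHull ℝ (vtx n '' Lset π), f y ≤ f x} =
        convexHull ℝ (vtx n '' EssSet π) :=
  stmt11_general n π hπ ℓ lam hdom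
end
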